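/- arXiv:1202.6156 — 5 statements merged into one kernel-verified Lean document; each statement's English description precedes it below -/
import Mathlib

section
/- A function φ : [1,∞) → (0,∞) (Borel measurable) is RO-varying at infinity if and only if it can be represented as φ(t) = exp(β(t) + ∫₁^t α(τ)/τ dτ) for t ≥ 1, where α and β are real-valued Borel measurable functions bounded on [1,∞). -/
open MeasureTheory Set

noncomputable section

/-- A Borel measurable function `φ : [1,∞) → (0,∞)` is RO-varying at infinity:
there exist `a > 1` and `c ≥ 1` with `c⁻¹ ≤ φ(λt)/φ(t) ≤ c` for all `t ≥ 1`, `λ ∈ [1,a]`. -/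
def IsRO (φ : ℝ → ℝ) : Prop :=
  Measurable ((Set.Ici (1:ℝ)).restrict φ) ∧ (∀ t : ℝ, 1 ≤ t → 0 < φ t) ∧
  ∃ a : ℝ, 1 < a ∧ ∃ c : ℝ, 1 ≤ c ∧
    ∀ t : ℝ, 1 ≤ t → ∀ l : ℝ, l ∈ Set.Icc (1:ℝ) a →
      c⁻¹ ≤ φ (l * t) / φ t ∧ φ (l * t) / φ t ≤ c

/-!
Write `h = log φ`, so that RO-variation says `|h(λt) - h(t)| ≤ K` for `t ≥ 1`, `λ ∈ [1,a]`.
Iterating this, `h` is bounded on every `[1,b]`, so `h(τ)/τ` is locally integrable on `[1,∞)`.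
Put `α(τ) = (h(aτ) - h(τ)) / log a`, which is bounded. The substitution `σ = aτ` gives
`∫₁ᵗ α(τ)/τ dτ = A(t) - A(1)`, where `A(t) = (log a)⁻¹ ∫ₜ^{at} h(τ)/τ dτ` is the logarithmic
average of `h` over `[t,at]`; as `|h(t) - A(t)| ≤ K`, the remainder `β = h - ∫₁ᵗ α/τ` is bounded.
Conversely, the representation gives `|log φ(λt) - log φ(t)| ≤ 2C + C log λ`.
-/

set_option linter.deprecated false

lemma intervalIntegrable_div_of_locallyBounded {f : ℝ → ℝ}
    (hf : Measurable ((Ici (1:ℝ)).restrict f))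
    (hbdd : ∀ b, ∃ M, ∀ τ ∈ Icc 1 b, |f τ| ≤ M) ⦃x y : ℝ⦄ (hx : 1 ≤ x) (hy : 1 ≤ y) :
    IntervalIntegrable (fun τ => f τ / τ) volume x y := by
  obtain ⟨M, hM⟩ := hbdd (max x y)
  have hsub : uIoc x y ⊆ Ici 1 := fun τ hτ => (le_min hx hy).trans (uIoc_subset_uIcc hτ).1
  have hf' : AEMeasurable f (volume.restrict (uIoc x y)) :=
    ((aemeasurable_restrict_iff_comap_subtype measurableSet_Ici).2 hf.aemeasurable).mono_set hsub
  rw [intervalIntegrable_iff]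
  refine IntegrableOn.of_bound measure_Ioc_lt_top
    (hf'.div measurable_id.aemeasurable).aestronglyMeasurable M ?_
  filter_upwards [ae_restrict_mem measurableSet_uIoc] with τ hτ
  have h1 : 1 ≤ τ := hsub hτ
  rw [Real.norm_eq_abs, abs_div, abs_of_pos (by linarith : (0:ℝ) < τ)]
  exact (div_le_self (abs_nonneg _) h1).trans (hM τ ⟨h1, (uIoc_subset_uIcc hτ).2⟩)

lemma continuousOn_primitive_div_of_locallyBounded {f : ℝ → ℝ}
    (hf : Measurable ((Ici (1:ℝ)).restrict f))
    (hbdd : ∀ b, ∃ M, ∀ τ ∈ Icc 1 b, |f τ| ≤ M) :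
    ContinuousOn (fun t => ∫ τ in (1:ℝ)..t, f τ / τ) (Ici 1) := by
  intro x hx
  have hx : (1:ℝ) ≤ x := hx
  have hcont := intervalIntegral.continuousOn_primitive_interval'
    (intervalIntegrable_div_of_locallyBounded hf hbdd le_rfl (by linarith : (1:ℝ) ≤ x + 1))
    left_mem_uIcc
  rw [uIcc_of_le (by linarith)] at hcont
  refine (hcont x ⟨hx, by linarith⟩).mono_of_mem_nhdsWithin ?_
  rw [← Ici_inter_Iic]
  exact inter_mem_nhdsWithin _ (Iic_mem_nhds (by linarith))

lemma abs_integral_div_le_mul_log {f : ℝ → ℝ} {t s C : ℝ} (ht : 0 < t) (hts : t ≤ s)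
    (hC : ∀ τ ∈ Icc t s, |f τ| ≤ C) :
    |∫ τ in t..s, f τ / τ| ≤ C * Real.log (s / t) := by
  have hinv : IntervalIntegrable (fun τ : ℝ => C * τ⁻¹) volume t s := by
    refine (intervalIntegral.intervalIntegrable_inv (f := id) (fun τ hτ => ?_)
      continuousOn_id).const_mul C
    rw [uIcc_of_le hts] at hτ
    exact (ht.trans_le hτ.1).ne'
  calc |∫ τ in t..s, f τ / τ| ≤ ∫ τ in t..s, C * τ⁻¹ := by
        rw [← Real.norm_eq_abs]
        refine intervalIntegral.norm_integral_le_of_norm_le hts (ae_of_all _ fun τ hτ => ?_) hinv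
        have hτ0 : 0 < τ := ht.trans hτ.1
        rw [Real.norm_eq_abs, abs_div, abs_of_pos hτ0, div_eq_mul_inv]
        exact mul_le_mul_of_nonneg_right (hC τ (Ioc_subset_Icc_self hτ)) (inv_nonneg.2 hτ0.le)
    _ = C * Real.log (s / t) := by
        rw [intervalIntegral.integral_const_mul, integral_inv_of_pos ht (ht.trans_le hts)]

lemma measurable_restrict_comp_const_mul {f : ℝ → ℝ} {a : ℝ}
    (hf : Measurable ((Ici (1:ℝ)).restrict f)) (ha : 1 ≤ a) :
    Measurable ((Ici (1:ℝ)).restrict fun τ => f (a * τ)) :=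
  hf.comp ((measurable_subtype_coe.const_mul a).subtype_mk
    (h := fun τ : Ici (1:ℝ) => one_le_mul_of_one_le_of_one_le ha τ.2))

lemma abs_sub_le_mul_of_le_pow {h : ℝ → ℝ} {a K : ℝ} (ha : 1 < a)
    (hh : ∀ t, 1 ≤ t → ∀ l ∈ Icc 1 a, |h (l * t) - h t| ≤ K) (n : ℕ) {τ : ℝ}
    (hτ : 1 ≤ τ) (hτn : τ ≤ a ^ n) : |h τ - h 1| ≤ n * K := by
  have hK : 0 ≤ K := (abs_nonneg _).trans (hh 1 le_rfl 1 ⟨le_rfl, ha.le⟩)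
  induction n generalizing τ with
  | zero => simp [le_antisymm (by simpa using hτn) hτ]
  | succ n ih =>
    by_cases hτa : τ ≤ a
    · have := hh 1 le_rfl τ ⟨hτ, hτa⟩
      rw [mul_one] at this
      push_cast
      nlinarith
    · have ha0 : 0 < a := by linarith
      have hs : 1 ≤ τ / a := by rw [le_div_iff₀ ha0]; linarith
      have hsn : τ / a ≤ a ^ n := by rwa [div_le_iff₀ ha0, ← pow_succ]
      have hstep := hh (τ / a) hs a ⟨ha.le, le_rfl⟩
      rw [mul_div_cancel₀ τ ha0.ne'] at hstep
      calc |h τ - h 1| ≤ |h τ - h (τ / a)| + |h (τ / a) - h 1| := abs_sub_le _ _ _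
        _ ≤ K + n * K := add_le_add hstep (ih hs hsn)
        _ = (n + 1 : ℕ) * K := by push_cast; ring

lemma exists_abs_le_of_abs_sub_le {h : ℝ → ℝ} {a K : ℝ} (ha : 1 < a)
    (hh : ∀ t, 1 ≤ t → ∀ l ∈ Icc 1 a, |h (l * t) - h t| ≤ K) (b : ℝ) :
    ∃ M, ∀ τ ∈ Icc 1 b, |h τ| ≤ M := by
  obtain ⟨n, hn⟩ := pow_unbounded_of_one_lt b ha
  refine ⟨|h 1| + n * K, fun τ hτ => ?_⟩
  have := abs_sub_le_mul_of_le_pow ha hh n hτ.1 (hτ.2.trans hn.le)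
  have := abs_sub_abs_le_abs_sub (h τ) (h 1)
  linarith

def logAverage (h : ℝ → ℝ) (a t : ℝ) : ℝ := (Real.log a)⁻¹ * ∫ τ in t..a * t, h τ / τ

lemma integral_div_eq_logAverage_sub {h : ℝ → ℝ} {a t : ℝ} (ha : 1 ≤ a) (ht : 1 ≤ t)
    (hint : ∀ ⦃x y⦄, 1 ≤ x → 1 ≤ y → IntervalIntegrable (fun τ => h τ / τ) volume x y)
    (hint_comp : IntervalIntegrable (fun τ => h (a * τ) / τ) volume 1 t) :
    ∫ τ in (1:ℝ)..t, (h (a * τ) - h τ) / Real.log a / τ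
      = logAverage h a t - logAverage h a 1 := by
  have ha0 : a ≠ 0 := by positivity
  have hat : 1 ≤ a * t := one_le_mul_of_one_le_of_one_le ha ht
  have hsubst : ∫ τ in (1:ℝ)..t, h (a * τ) / τ = ∫ σ in a..a * t, h σ / σ := by
    have : (fun τ => h (a * τ) / τ) = fun τ => a * (h (a * τ) / (a * τ)) := by
      funext τ
      rw [mul_div_assoc', mul_div_mul_left _ _ ha0]
    rw [this, intervalIntegral.integral_const_mul,
      intervalIntegral.integral_comp_mul_left (fun σ => h σ / σ) ha0, smul_eq_mul, mul_one,
      mul_inv_cancel_left₀ ha0]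
  have hsplit : ∫ τ in (1:ℝ)..t, (h (a * τ) - h τ) / τ
      = (∫ τ in t..a * t, h τ / τ) - ∫ τ in (1:ℝ)..a, h τ / τ := by
    simp_rw [sub_div]
    rw [intervalIntegral.integral_sub hint_comp (hint le_rfl ht), hsubst]
    have h1 := intervalIntegral.integral_add_adjacent_intervals (hint le_rfl ha) (hint ha hat)
    have h2 := intervalIntegral.integral_add_adjacent_intervals (hint le_rfl ht) (hint ht hat)
    linarith
  simp_rw [div_right_comm _ (Real.log a), div_eq_inv_mul _ (Real.log a)]
  rw [intervalIntegral.integral_const_mul, hsplit, logAverage, logAverage, mul_one, mul_sub]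

lemma abs_sub_logAverage_le {h : ℝ → ℝ} {a K t : ℝ} (ha : 1 < a)
    (hh : ∀ t, 1 ≤ t → ∀ l ∈ Icc 1 a, |h (l * t) - h t| ≤ K) (ht : 1 ≤ t)
    (hint : IntervalIntegrable (fun τ => h τ / τ) volume t (a * t)) :
    |h t - logAverage h a t| ≤ K := by
  have ht0 : 0 < t := by linarith
  have hla : 0 < Real.log a := Real.log_pos ha
  have hconst : ∫ τ in t..a * t, h t / τ = h t * Real.log a := by
    simp_rw [div_eq_mul_inv]
    rw [intervalIntegral.integral_const_mul, integral_inv_of_pos ht0 (by positivity),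
      mul_div_cancel_right₀ a ht0.ne']
  have hconst_int : IntervalIntegrable (fun τ => h t / τ) volume t (a * t) := by
    simp_rw [div_eq_mul_inv]
    refine (intervalIntegral.intervalIntegrable_inv (f := id) (fun τ hτ => ?_)
      continuousOn_id).const_mul _
    rw [uIcc_of_le (by nlinarith)] at hτ
    exact (ht0.trans_le hτ.1).ne'
  have hclose : ∀ τ ∈ Icc t (a * t), |h t - h τ| ≤ K := fun τ hτ => by
    have := hh t ht (τ / t) ⟨(one_le_div ht0).2 hτ.1, (div_le_iff₀ ht0).2 hτ.2⟩
    rwa [div_mul_cancel₀ τ ht0.ne', abs_sub_comm] at this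
  have hbound : |∫ τ in t..a * t, (h t - h τ) / τ| ≤ K * Real.log a := by
    have := abs_integral_div_le_mul_log (f := fun τ => h t - h τ) ht0 (by nlinarith) hclose
    rwa [mul_div_cancel_right₀ a ht0.ne'] at this
  have hdiff : h t - logAverage h a t = (Real.log a)⁻¹ * ∫ τ in t..a * t, (h t - h τ) / τ := by
    simp_rw [sub_div]
    rw [logAverage, intervalIntegral.integral_sub hconst_int hint, hconst]
    field_simp
  rw [hdiff, abs_mul, abs_inv, abs_of_pos hla]
  calc (Real.log a)⁻¹ * |∫ τ in t..a * t, (h t - h τ) / τ|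
      ≤ (Real.log a)⁻¹ * (K * Real.log a) := by gcongr
    _ = K := by field_simp

theorem exists_repr_of_abs_sub_le {h : ℝ → ℝ} {a K : ℝ}
    (hmeas : Measurable ((Ici (1:ℝ)).restrict h)) (ha : 1 < a)
    (hh : ∀ t, 1 ≤ t → ∀ l ∈ Icc 1 a, |h (l * t) - h t| ≤ K) :
    ∃ α β : ℝ → ℝ,
      Measurable ((Ici (1:ℝ)).restrict α) ∧ Measurable ((Ici (1:ℝ)).restrict β) ∧
      (∃ C : ℝ, ∀ t, 1 ≤ t → |α t| ≤ C ∧ |β t| ≤ C) ∧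
      ∀ t, 1 ≤ t → h t = β t + ∫ τ in (1:ℝ)..t, α τ / τ := by
  have hK : 0 ≤ K := (abs_nonneg _).trans (hh 1 le_rfl 1 ⟨le_rfl, ha.le⟩)
  have hla : 0 < Real.log a := Real.log_pos ha
  have hint := intervalIntegrable_div_of_locallyBounded hmeas (exists_abs_le_of_abs_sub_le ha hh)
  have hint_comp : ∀ t, 1 ≤ t → IntervalIntegrable (fun τ => h (a * τ) / τ) volume 1 t := by
    refine fun t ht => intervalIntegrable_div_of_locallyBounded
      (measurable_restrict_comp_const_mul hmeas ha.le) (fun b => ?_) le_rfl ht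
    obtain ⟨M, hM⟩ := exists_abs_le_of_abs_sub_le ha hh (a * b)
    exact ⟨M, fun τ hτ => hM _ ⟨by nlinarith [hτ.1], by nlinarith [hτ.2]⟩⟩
  set α : ℝ → ℝ := fun τ => (h (a * τ) - h τ) / Real.log a
  have hα_meas : Measurable ((Ici (1:ℝ)).restrict α) :=
    ((measurable_restrict_comp_const_mul hmeas ha.le).sub hmeas).div_const _
  have hα_le : ∀ τ, 1 ≤ τ → |α τ| ≤ K / Real.log a := fun τ hτ => by
    rw [abs_div, abs_of_pos hla]
    exact div_le_div_of_nonneg_right (hh τ hτ a ⟨ha.le, le_rfl⟩) hla.le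
  set β : ℝ → ℝ := fun t => h t - ∫ τ in (1:ℝ)..t, α τ / τ
  have hβ_meas : Measurable ((Ici (1:ℝ)).restrict β) :=
    hmeas.sub (continuousOn_primitive_div_of_locallyBounded hα_meas
      fun _ => ⟨_, fun τ hτ => hα_le τ hτ.1⟩).restrict.measurable
  have hβ_le : ∀ t, 1 ≤ t → |β t| ≤ K + |logAverage h a 1| := fun t ht => by
    have hβ_eq : β t = (h t - logAverage h a t) + logAverage h a 1 := by
      simp only [β, α, integral_div_eq_logAverage_sub ha.le ht hint (hint_comp t ht)]
      ring
    rw [hβ_eq]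
    exact (abs_add_le _ _).trans (add_le_add_left
      (abs_sub_logAverage_le ha hh ht (hint ht (by nlinarith))) _)
  refine ⟨α, β, hα_meas, hβ_meas, ⟨K / Real.log a + (K + |logAverage h a 1|),
    fun t ht => ⟨?_, ?_⟩⟩, fun _ _ => (sub_add_cancel _ _).symm⟩
  · exact (hα_le t ht).trans (le_add_of_nonneg_right (by positivity))
  · exact (hβ_le t ht).trans (le_add_of_nonneg_left (by positivity))

lemma abs_sub_le_of_repr {α β : ℝ → ℝ} {C t l : ℝ}
    (hα : Measurable ((Ici (1:ℝ)).restrict α))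
    (hC : ∀ τ, 1 ≤ τ → |α τ| ≤ C ∧ |β τ| ≤ C) (ht : 1 ≤ t) (hl : 1 ≤ l) :
    |(β (l * t) + ∫ τ in (1:ℝ)..l * t, α τ / τ) - (β t + ∫ τ in (1:ℝ)..t, α τ / τ)|
      ≤ 2 * C + C * Real.log l := by
  have ht0 : 0 < t := by linarith
  have hlt : 1 ≤ l * t := one_le_mul_of_one_le_of_one_le hl ht
  have hint := intervalIntegrable_div_of_locallyBounded hα fun _ => ⟨C, fun τ hτ => (hC τ hτ.1).1⟩
  have hincr : |(∫ τ in (1:ℝ)..l * t, α τ / τ) - ∫ τ in (1:ℝ)..t, α τ / τ| ≤ C * Real.log l := by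
    rw [intervalIntegral.integral_interval_sub_left (hint le_rfl hlt) (hint le_rfl ht)]
    have := abs_integral_div_le_mul_log (f := α) (s := l * t) ht0 (by nlinarith)
      fun τ hτ => (hC τ (ht.trans hτ.1)).1
    rwa [mul_div_cancel_right₀ l ht0.ne'] at this
  calc _ = |(β (l * t) - β t)
          + ((∫ τ in (1:ℝ)..l * t, α τ / τ) - ∫ τ in (1:ℝ)..t, α τ / τ)| := by ring_nf
    _ ≤ (|β (l * t)| + |β t|) + C * Real.log l :=
        (abs_add_le _ _).trans (add_le_add (abs_sub _ _) hincr)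
    _ ≤ 2 * C + C * Real.log l := by linarith [(hC _ hlt).2, (hC t ht).2]

lemma isRO_of_eq_exp {φ ψ : ℝ → ℝ} {a K : ℝ} (hψ : Measurable ((Ici (1:ℝ)).restrict ψ))
    (hφ : ∀ t, 1 ≤ t → φ t = Real.exp (ψ t)) (ha : 1 < a)
    (hK : ∀ t, 1 ≤ t → ∀ l ∈ Icc 1 a, |ψ (l * t) - ψ t| ≤ K) : IsRO φ := by
  have hK0 : 0 ≤ K := (abs_nonneg _).trans (hK 1 le_rfl 1 ⟨le_rfl, ha.le⟩)
  have hrestrict : (Ici (1:ℝ)).restrict φ = fun t => Real.exp ((Ici (1:ℝ)).restrict ψ t) :=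
    funext fun t => hφ t t.2
  refine ⟨by rw [hrestrict]; exact hψ.exp, fun t ht => hφ t ht ▸ Real.exp_pos _,
    a, ha, Real.exp K, Real.one_le_exp hK0, fun t ht l hl => ?_⟩
  rw [hφ t ht, hφ _ (one_le_mul_of_one_le_of_one_le hl.1 ht), ← Real.exp_sub, ← Real.exp_neg]
  obtain ⟨hlo, hhi⟩ := abs_le.mp (hK t ht l hl)
  exact ⟨Real.exp_le_exp.2 hlo, Real.exp_le_exp.2 hhi⟩

lemma IsRO.exists_abs_log_sub_le {φ : ℝ → ℝ} (hφ : IsRO φ) :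
    ∃ a, 1 < a ∧ ∃ K, ∀ t, 1 ≤ t → ∀ l ∈ Icc 1 a,
      |Real.log (φ (l * t)) - Real.log (φ t)| ≤ K := by
  obtain ⟨-, hpos, a, ha, c, hc, hro⟩ := hφ
  refine ⟨a, ha, Real.log c, fun t ht l hl => ?_⟩
  have hφt := hpos t ht
  have hφlt := hpos _ (one_le_mul_of_one_le_of_one_le hl.1 ht)
  obtain ⟨hlo, hhi⟩ := hro t ht l hl
  rw [← Real.log_div hφlt.ne' hφt.ne', abs_le, ← Real.log_inv]
  exact ⟨Real.log_le_log (by positivity) hlo, Real.log_le_log (div_pos hφlt hφt) hhi⟩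

theorem isRO_iff_representation_general (φ : ℝ → ℝ) :
    IsRO φ ↔
      ∃ α β : ℝ → ℝ,
        Measurable ((Set.Ici (1:ℝ)).restrict α) ∧
        Measurable ((Set.Ici (1:ℝ)).restrict β) ∧
        (∃ C : ℝ, ∀ t : ℝ, 1 ≤ t → |α t| ≤ C ∧ |β t| ≤ C) ∧
        ∀ t : ℝ, 1 ≤ t →
          φ t = Real.exp (β t + ∫ τ in (1:ℝ)..t, α τ / τ) := by
  constructor
  · intro hφ
    obtain ⟨a, ha, K, hK⟩ := hφ.exists_abs_log_sub_le
    obtain ⟨α, β, hα, hβ, hC, hrep⟩ := exists_repr_of_abs_sub_le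
      (h := fun t => Real.log (φ t)) (Real.measurable_log.comp hφ.1) ha hK
    refine ⟨α, β, hα, hβ, hC, fun t ht => ?_⟩
    rw [← hrep t ht, Real.exp_log (hφ.2.1 t ht)]
  · rintro ⟨α, β, hα, hβ, ⟨C, hC⟩, hrep⟩
    have hψ : Measurable ((Ici (1:ℝ)).restrict fun t => β t + ∫ τ in (1:ℝ)..t, α τ / τ) :=
      hβ.add (continuousOn_primitive_div_of_locallyBounded hα
        fun _ => ⟨C, fun τ hτ => (hC τ hτ.1).1⟩).restrict.measurable
    refine isRO_of_eq_exp hψ hrep (Real.one_lt_exp_iff.2 one_pos) (K := 3 * C) fun t ht l hl => ?_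
    have hlog : Real.log l ≤ 1 := by
      simpa using Real.log_le_log (by linarith [hl.1]) hl.2
    have hC0 : 0 ≤ C := (abs_nonneg _).trans (hC 1 le_rfl).1
    nlinarith [abs_sub_le_of_repr hα hC ht hl.1]

/-- A Borel measurable positive function `φ` on `[1,∞)` is RO-varying at infinity
if and only if `φ(t) = exp(β(t) + ∫₁^t α(τ)/τ dτ)` for `t ≥ 1`, with `α, β`
Borel measurable and bounded on `[1,∞)`. -/
theorem isRO_iff_representation (φ : ℝ → ℝ)
    (hmeas : Measurable ((Set.Ici (1:ℝ)).restrict φ))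
    (hpos : ∀ t : ℝ, 1 ≤ t → 0 < φ t) :
    IsRO φ ↔
      ∃ α β : ℝ → ℝ,
        Measurable ((Set.Ici (1:ℝ)).restrict α) ∧
        Measurable ((Set.Ici (1:ℝ)).restrict β) ∧
        (∃ C : ℝ, ∀ t : ℝ, 1 ≤ t → |α t| ≤ C ∧ |β t| ≤ C) ∧
        ∀ t : ℝ, 1 ≤ t →
          φ t = Real.exp (β t + ∫ τ in (1:ℝ)..t, α τ / τ) :=
  isRO_iff_representation_general φ
end
end

section
/- Let ω : [1,∞) → (0,∞) be RO-varying at infinity, λ ≥ 0 an integer, and n ≥ 1. Then ∫_{ℝⁿ} ⟨ξ⟩^{2λ} ω(⟨ξ⟩)^{-2} dξ < ∞ if and only if ∫₁^∞ t^{2λ+n-1} ω(t)^{-2} dt < ∞, where ⟨ξ⟩ := (1+|ξ|²)^{1/2}. -/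
open MeasureTheory Set

noncomputable section

/-- The smoothed norm `⟨ξ⟩ = (1+|ξ|²)^{1/2}` of `ξ ∈ ℝⁿ`. -/
def smoothedNorm {n : ℕ} (ξ : EuclideanSpace ℝ (Fin n)) : ℝ :=
  Real.sqrt (1 + ‖ξ‖ ^ 2)

/-! In polar coordinates the left integral becomes `∫₀^∞ r^(n-1) F(√(1+r²)) dr` with
`F(t) = t^(2λ) ω(t)⁻²`, and the substitution `t = √(1+r²)` turns the right one into
`∫₀^∞ (r/t) t^(n-1) F(t) dr`. For `r ≥ 1` the two integrands are comparable
since `r ≤ t ≤ 2r`; for `r ≤ 1` both are bounded, because an RO-varying function is bounded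
away from zero on `[1, 2]` (iterate the RO bound from `ω 1`). -/

lemma le_sqrt_one_add_sq (r : ℝ) : r ≤ √(1 + r ^ 2) :=
  Real.le_sqrt_of_sq_le (by linarith)

lemma one_le_sqrt_one_add_sq (r : ℝ) : 1 ≤ √(1 + r ^ 2) :=
  Real.one_le_sqrt.2 (by nlinarith)

lemma sqrt_one_add_sq_le_two_mul {r : ℝ} (hr : 1 ≤ r) : √(1 + r ^ 2) ≤ 2 * r :=
  Real.sqrt_le_iff.2 ⟨by linarith, by nlinarith⟩

lemma sqrt_one_add_sq_le_two {r : ℝ} (hr₀ : 0 ≤ r) (hr₁ : r ≤ 1) : √(1 + r ^ 2) ≤ 2 :=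
  Real.sqrt_le_iff.2 ⟨by norm_num, by nlinarith⟩

lemma hasDerivAt_sqrt_one_add_sq (r : ℝ) :
    HasDerivAt (fun r : ℝ => √(1 + r ^ 2)) (r / √(1 + r ^ 2)) r := by
  convert ((hasDerivAt_pow 2 r).const_add 1).sqrt (by positivity) using 1
  ring

lemma strictMonoOn_sqrt_one_add_sq : StrictMonoOn (fun r : ℝ => √(1 + r ^ 2)) (Ici 0) :=
  fun _ ha _ _ hab =>
    Real.sqrt_lt_sqrt (by positivity) (by simp only [mem_Ici] at ha; nlinarith)

lemma image_sqrt_one_add_sq_Ioi_zero : (fun r : ℝ => √(1 + r ^ 2)) '' Ioi 0 = Ioi 1 := by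
  ext t
  constructor
  · rintro ⟨r, hr, rfl⟩
    exact Real.lt_sqrt_of_sq_lt (by simp only [mem_Ioi] at hr; nlinarith)
  · intro ht
    simp only [mem_Ioi] at ht
    refine ⟨√(t ^ 2 - 1), Real.sqrt_pos.2 (by nlinarith), ?_⟩
    dsimp only
    rw [Real.sq_sqrt (by nlinarith), add_sub_cancel, Real.sqrt_sq (by linarith)]

section

variable {G : Type*} [NormedAddCommGroup G]

lemma integrableOn_Ioi_iff_of_integrableOn_Ioc {f : ℝ → G} {a b : ℝ} (hab : a ≤ b)
    (h : IntegrableOn f (Ioc a b)) : IntegrableOn f (Ioi a) ↔ IntegrableOn f (Ioi b) := by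
  rw [← Ioc_union_Ioi_eq_Ioi hab, integrableOn_union, and_iff_right h]

lemma integrableOn_iff_of_norm_le_mul {α : Type*} [MeasurableSpace α] {μ : Measure α}
    {s : Set α} (hs : MeasurableSet s) {f g : α → G}
    (hf : AEStronglyMeasurable f (μ.restrict s)) (hg : AEStronglyMeasurable g (μ.restrict s))
    {C D : ℝ} (hfg : ∀ x ∈ s, ‖f x‖ ≤ C * ‖g x‖) (hgf : ∀ x ∈ s, ‖g x‖ ≤ D * ‖f x‖) :
    IntegrableOn f s μ ↔ IntegrableOn g s μ :=
  ⟨fun h => (h.norm.const_mul D).mono' hg (ae_restrict_of_forall_mem hs hgf),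
    fun h => (h.norm.const_mul C).mono' hf (ae_restrict_of_forall_mem hs hfg)⟩

variable [NormedSpace ℝ G]

lemma integrableOn_Ici_one_iff_integrableOn_comp_sqrt_one_add_sq {g : ℝ → G} :
    IntegrableOn g (Ici 1) ↔
      IntegrableOn (fun r => (r / √(1 + r ^ 2)) • g √(1 + r ^ 2)) (Ioi 0) := by
  rw [integrableOn_Ici_iff_integrableOn_Ioi, ← image_sqrt_one_add_sq_Ioi_zero,
    integrableOn_image_iff_integrableOn_abs_deriv_smul measurableSet_Ioi
      (fun r _ => (hasDerivAt_sqrt_one_add_sq r).hasDerivWithinAt)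
      (strictMonoOn_sqrt_one_add_sq.injOn.mono Ioi_subset_Ici_self)]
  refine integrableOn_congr_fun (fun r (hr : 0 < r) => ?_) measurableSet_Ioi
  rw [abs_of_pos (by positivity)]

lemma norm_pow_smul_le_two_mul {r : ℝ} (hr : 1 ≤ r) (k : ℕ) (x : G) :
    ‖r ^ k • x‖ ≤ 2 * ‖(r / √(1 + r ^ 2)) • √(1 + r ^ 2) ^ k • x‖ := by
  have hs := one_le_sqrt_one_add_sq r
  have hr₀ : 0 < r := by linarith
  simp only [norm_smul, Real.norm_eq_abs, abs_pow, abs_div, abs_of_pos hr₀,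
    abs_of_pos (zero_lt_one.trans_le hs)]
  calc r ^ k * ‖x‖ = 1 * r ^ k * ‖x‖ := by ring
    _ ≤ (2 * r / √(1 + r ^ 2)) * √(1 + r ^ 2) ^ k * ‖x‖ := by
        gcongr
        · rw [one_le_div (by positivity)]
          exact sqrt_one_add_sq_le_two_mul hr
        · exact le_sqrt_one_add_sq r
    _ = _ := by ring

lemma norm_div_smul_pow_smul_le {r : ℝ} (hr : 1 ≤ r) (k : ℕ) (x : G) :
    ‖(r / √(1 + r ^ 2)) • √(1 + r ^ 2) ^ k • x‖ ≤ 2 ^ k * ‖r ^ k • x‖ := by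
  have hs := one_le_sqrt_one_add_sq r
  have hr₀ : 0 < r := by linarith
  simp only [norm_smul, Real.norm_eq_abs, abs_pow, abs_div, abs_of_pos hr₀,
    abs_of_pos (zero_lt_one.trans_le hs)]
  calc r / √(1 + r ^ 2) * (√(1 + r ^ 2) ^ k * ‖x‖) ≤ 1 * ((2 * r) ^ k * ‖x‖) := by
        gcongr
        · exact div_le_one_of_le₀ (le_sqrt_one_add_sq r) (by positivity)
        · exact sqrt_one_add_sq_le_two_mul hr
    _ = _ := by ring

variable {E : Type*} [NormedAddCommGroup E] [NormedSpace ℝ E] [Nontrivial E]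
  [FiniteDimensional ℝ E] [MeasurableSpace E] [BorelSpace E]

theorem integrable_comp_sqrt_one_add_norm_sq_iff (μ : Measure E) [μ.IsAddHaarMeasure]
    {f : ℝ → G} (hf : StronglyMeasurable f) {C : ℝ} (hC : ∀ t ∈ Icc 1 2, ‖f t‖ ≤ C) :
    Integrable (fun x => f √(1 + ‖x‖ ^ 2)) μ ↔
      IntegrableOn (fun t => t ^ (Module.finrank ℝ E - 1) • f t) (Ici 1) := by
  set k := Module.finrank ℝ E - 1
  have hfs : StronglyMeasurable fun r : ℝ => f √(1 + r ^ 2) := hf.comp_measurable (by fun_prop)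
  have hA : StronglyMeasurable fun r : ℝ => r ^ k • f √(1 + r ^ 2) :=
    (continuous_pow k).stronglyMeasurable.smul hfs
  have hB : StronglyMeasurable
      fun r : ℝ => (r / √(1 + r ^ 2)) • √(1 + r ^ 2) ^ k • f √(1 + r ^ 2) :=
    (by fun_prop : Measurable fun r : ℝ => r / √(1 + r ^ 2)).stronglyMeasurable.smul
      ((by fun_prop : Continuous fun r : ℝ => √(1 + r ^ 2) ^ k).stronglyMeasurable.smul hfs)
  have hA_Ioc : IntegrableOn (fun r : ℝ => r ^ k • f √(1 + r ^ 2)) (Ioc 0 1) := by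
    refine Measure.integrableOn_of_bounded (M := C) (by simp) hA.aestronglyMeasurable ?_
    refine ae_restrict_of_forall_mem measurableSet_Ioc fun r ⟨hr₀, hr₁⟩ => ?_
    have hfC := hC _ ⟨one_le_sqrt_one_add_sq r, sqrt_one_add_sq_le_two hr₀.le hr₁⟩
    rw [norm_smul, norm_pow, Real.norm_of_nonneg hr₀.le]
    exact (mul_le_of_le_one_left (norm_nonneg _) (pow_le_one₀ hr₀.le hr₁)).trans hfC
  have hB_Ioc : IntegrableOn
      (fun r : ℝ => (r / √(1 + r ^ 2)) • √(1 + r ^ 2) ^ k • f √(1 + r ^ 2)) (Ioc 0 1) := by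
    refine Measure.integrableOn_of_bounded (M := 2 ^ k * C) (by simp)
      hB.aestronglyMeasurable ?_
    refine ae_restrict_of_forall_mem measurableSet_Ioc fun r ⟨hr₀, hr₁⟩ => ?_
    have hs := sqrt_one_add_sq_le_two hr₀.le hr₁
    have hfC := hC _ ⟨one_le_sqrt_one_add_sq r, hs⟩
    rw [norm_smul, norm_smul, norm_pow, Real.norm_of_nonneg (by positivity),
      Real.norm_of_nonneg (by positivity)]
    refine (mul_le_of_le_one_left (by positivity) ?_).trans (by gcongr)
    exact div_le_one_of_le₀ (le_sqrt_one_add_sq r) (by positivity)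
  rw [integrable_fun_norm_addHaar μ (f := fun r => f √(1 + r ^ 2)),
    integrableOn_Ici_one_iff_integrableOn_comp_sqrt_one_add_sq,
    integrableOn_Ioi_iff_of_integrableOn_Ioc zero_le_one hA_Ioc,
    integrableOn_Ioi_iff_of_integrableOn_Ioc zero_le_one hB_Ioc]
  exact integrableOn_iff_of_norm_le_mul measurableSet_Ioi
    hA.aestronglyMeasurable hB.aestronglyMeasurable
    (fun r hr => norm_pow_smul_le_two_mul (le_of_lt hr) k _)
    (fun r hr => norm_div_smul_pow_smul_le (le_of_lt hr) k _)

end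

namespace IsRO

variable {ω : ℝ → ℝ}

lemma measurable_comp_max_one (hω : IsRO ω) : Measurable fun t => ω (max t 1) :=
  hω.1.comp ((measurable_id.max measurable_const).subtype_mk (h := fun t => le_max_right t 1))

lemma exists_pos_le_of_mem_Icc (hω : IsRO ω) (M : ℝ) :
    ∃ ε > 0, ∀ t ∈ Icc 1 M, ε ≤ ω t := by
  obtain ⟨-, hpos, a, ha, c, hc, hbd⟩ := hω
  have hc₀ : 0 < c := zero_lt_one.trans_le hc
  have hstep : ∀ t, 1 ≤ t → ∀ l ∈ Icc 1 a, c⁻¹ * ω t ≤ ω (l * t) := fun t ht l hl =>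
    (le_div_iff₀ (hpos t ht)).1 (hbd t ht l hl).1
  have key : ∀ k : ℕ, ∀ t ∈ Icc 1 (a ^ k), ω 1 / c ^ k ≤ ω t := by
    intro k
    induction k with
    | zero =>
      rintro t ⟨ht₁, ht₂⟩
      rw [le_antisymm (by simpa using ht₂) ht₁]
      simp
    | succ k ih =>
      intro t ht
      have hak : 1 ≤ a ^ k := one_le_pow₀ ha.le
      obtain ⟨l, hl, t₀, ht₀, rfl⟩ : ∃ l ∈ Icc 1 a, ∃ t₀ ∈ Icc 1 (a ^ k), t = l * t₀ := by
        by_cases hta : t ≤ a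
        · exact ⟨t, ⟨ht.1, hta⟩, 1, ⟨le_rfl, hak⟩, (mul_one t).symm⟩
        · refine ⟨a, ⟨ha.le, le_rfl⟩, t / a, ⟨?_, ?_⟩, by field_simp⟩
          · rw [le_div_iff₀ (by linarith)]; linarith
          · rw [div_le_iff₀ (by linarith), ← pow_succ]; exact ht.2
      calc ω 1 / c ^ (k + 1) = c⁻¹ * (ω 1 / c ^ k) := by rw [pow_succ]; field_simp
        _ ≤ c⁻¹ * ω t₀ := by gcongr; exact ih t₀ ht₀
        _ ≤ ω (l * t₀) := hstep t₀ ht₀.1 l hl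
  obtain ⟨k, hk⟩ := pow_unbounded_of_one_lt M ha
  exact ⟨ω 1 / c ^ k, div_pos (hpos 1 le_rfl) (pow_pos hc₀ k),
    fun t ht => key k t ⟨ht.1, ht.2.trans hk.le⟩⟩

end IsRO

/-- For `ω` RO-varying, `λ ≥ 0` an integer and `n ≥ 1`:
`∫_{ℝⁿ} ⟨ξ⟩^{2λ} ω(⟨ξ⟩)⁻² dξ < ∞  ↔  ∫₁^∞ t^{2λ+n-1} ω(t)⁻² dt < ∞`. -/
theorem integrable_smoothedNorm_iff (n lam : ℕ) (hn : 1 ≤ n) (ω : ℝ → ℝ)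
    (hω : IsRO ω) :
    Integrable (fun ξ : EuclideanSpace ℝ (Fin n) =>
        smoothedNorm ξ ^ (2 * (lam : ℝ)) * ((ω (smoothedNorm ξ))⁻¹) ^ 2) ↔
      IntegrableOn (fun t : ℝ => t ^ (2 * (lam : ℝ) + n - 1) * ((ω t)⁻¹) ^ 2)
        (Set.Ici (1:ℝ)) := by
  have : Nontrivial (EuclideanSpace ℝ (Fin n)) :=
    have : Nonempty (Fin n) := ⟨⟨0, hn⟩⟩
    inferInstance
  -- `ω` is only measurable on `[1, ∞)`, where the `max` has no effect and all arguments lie.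
  set F : ℝ → ℝ := fun t => t ^ (2 * (lam : ℝ)) * ((ω (max t 1))⁻¹) ^ 2
  have hF : StronglyMeasurable F :=
    ((measurable_id.pow_const _).mul
      (hω.measurable_comp_max_one.inv.pow_const 2)).stronglyMeasurable
  obtain ⟨ε, hε, hε_le⟩ := hω.exists_pos_le_of_mem_Icc 2
  have hFC : ∀ t ∈ Icc 1 2, ‖F t‖ ≤ 2 ^ (2 * (lam : ℝ)) * (ε⁻¹) ^ 2 := by
    rintro t ⟨ht₁, ht₂⟩
    have hωt := hε_le t ⟨ht₁, ht₂⟩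
    have hωt₀ := hε.trans_le hωt
    simp only [F, max_eq_left ht₁]
    rw [Real.norm_of_nonneg (by positivity)]
    gcongr
  have key := integrable_comp_sqrt_one_add_norm_sq_iff
    (volume : Measure (EuclideanSpace ℝ (Fin n))) hF hFC
  rw [finrank_euclideanSpace_fin] at key
  convert key using 1
  · congr! 2 with ξ
    simp only [F, smoothedNorm, max_eq_left (one_le_sqrt_one_add_sq ‖ξ‖)]
  · refine integrableOn_congr_fun (fun t (ht : 1 ≤ t) => ?_) measurableSet_Ici
    simp only [F, max_eq_left ht, smul_eq_mul, ← mul_assoc]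
    rw [← Real.rpow_natCast t (n - 1), ← Real.rpow_add (by linarith), Nat.cast_sub hn,
      Nat.cast_one]
    ring_nf
end
end

section
/- For any φ in RO, the spaces H^φ and H^{1/φ} are in duality via the extension by continuity of the sesquilinear form (w₁,w₂) ↦ ∫_{ℝⁿ} w₁(x) conj(w₂(x)) dx from Schwartz functions: the map assigning to each v ∈ H^{1/φ} the functional w ↦ (w,v) is an anti-linear isomorphism of H^{1/φ} onto the dual of H^φ, with norm equal to ‖v‖_{1/φ}. -/
/-!
On the Fourier side `H^φ` is `L²(M² dξ)` and `H^{1/φ}` is `L²(M⁻² dξ)` with `M ξ = φ(⟨ξ⟩)`.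
Multiplication by `M⁻²` is an isometric isomorphism of `L²(M⁻² dξ)` onto `L²(M² dξ)`, and it
carries the pairing `∫ ŵ conj(v̂) dξ` (by Parseval, `∫ w conj(v) dx`) to the inner product of
`L²(M² dξ)`. The Riesz representation theorem, which is anti-linear, then identifies `H^{1/φ}`
with the dual of `H^φ`.
-/

open MeasureTheory Set

noncomputable section

/-- Membership of (the Fourier transform of) a distribution in the Hörmander space `H^φ`:
the Fourier-side representative `g` satisfies `∫ φ(⟨ξ⟩)² |g(ξ)|² dξ < ∞`. -/
def MemHorm {n : ℕ} (φ : ℝ → ℝ) (g : EuclideanSpace ℝ (Fin n) → ℂ) : Prop :=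
  Integrable (fun ξ => (φ (smoothedNorm ξ)) ^ 2 * ‖g ξ‖ ^ 2)

/-- The square of the Hörmander norm `‖w‖_φ` of a distribution with Fourier transform `g`. -/
def hormNormSq {n : ℕ} (φ : ℝ → ℝ) (g : EuclideanSpace ℝ (Fin n) → ℂ) : ℝ :=
  ∫ ξ, (φ (smoothedNorm ξ)) ^ 2 * ‖g ξ‖ ^ 2

/-- The measure `φ(⟨ξ⟩)² dξ` on `ℝⁿ`, so that (the Fourier-side model of) the
Hörmander space `H^φ` is `L²` of this measure. -/
def hormMeasure (n : ℕ) (φ : ℝ → ℝ) : Measure (EuclideanSpace ℝ (Fin n)) :=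
  (volume : Measure (EuclideanSpace ℝ (Fin n))).withDensity
    fun ξ => ENNReal.ofReal ((φ (smoothedNorm ξ)) ^ 2)

section Weighted

variable {α : Type*} [MeasurableSpace α] {μ : Measure α} {M N : α → ℝ}
variable {𝕜 : Type*} [RCLike 𝕜]

def weightedMeasure (μ : Measure α) (M : α → ℝ) : Measure α :=
  μ.withDensity fun x => ENNReal.ofReal (M x ^ 2)

theorem ae_weightedMeasure (hM : Measurable M) (hM0 : ∀ᵐ x ∂μ, M x ≠ 0) :
    ae (weightedMeasure μ M) = ae μ := by
  refine le_antisymm (withDensity_absolutelyContinuous _ _).ae_le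
    (withDensity_absolutelyContinuous' (hM.pow_const 2).ennreal_ofReal.aemeasurable ?_).ae_le
  filter_upwards [hM0] with x hx
  simpa using hx

theorem integral_weightedMeasure {E : Type*} [NormedAddCommGroup E] [NormedSpace ℝ E]
    (hM : Measurable M) (f : α → E) :
    ∫ x, f x ∂(weightedMeasure μ M) = ∫ x, M x ^ 2 • f x ∂μ := by
  refine (integral_withDensity_eq_integral_smul (hM.pow_const 2).real_toNNReal f).trans ?_
  congr 1 with x
  rw [NNReal.smul_def, Real.coe_toNNReal _ (sq_nonneg _)]

section NormedSpace

variable {E : Type*} [NormedAddCommGroup E] [NormedSpace 𝕜 E]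

theorem eLpNorm_weightedMeasure (hM : Measurable M) (f : α → E) :
    eLpNorm f 2 (weightedMeasure μ M) = eLpNorm (fun x => (M x : 𝕜) • f x) 2 μ := by
  simp only [eLpNorm_eq_lintegral_rpow_enorm_toReal two_ne_zero ENNReal.ofNat_ne_top,
    ENNReal.toReal_ofNat, weightedMeasure]
  rw [lintegral_withDensity_eq_lintegral_mul_non_measurable _ (hM.pow_const 2).ennreal_ofReal
    (ae_of_all _ fun _ => ENNReal.ofReal_lt_top)]
  congr 2 with x
  rw [Pi.mul_apply, enorm_smul, ENNReal.mul_rpow_of_nonneg _ _ zero_le_two,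
    ← ofReal_norm (M x : 𝕜), RCLike.norm_ofReal, ENNReal.ofReal_rpow_of_nonneg (abs_nonneg _)
    zero_le_two, Real.rpow_two, sq_abs]

theorem eLpNorm_weightedMeasure_div_smul (hM : Measurable M) (hN : Measurable N)
    (hM0 : ∀ᵐ x ∂μ, M x ≠ 0) (f : α → E) :
    eLpNorm (fun x => ((N x / M x : ℝ) : 𝕜) • f x) 2 (weightedMeasure μ M) =
      eLpNorm f 2 (weightedMeasure μ N) := by
  rw [eLpNorm_weightedMeasure (𝕜 := 𝕜) hM, eLpNorm_weightedMeasure (𝕜 := 𝕜) hN]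
  refine eLpNorm_congr_ae ?_
  filter_upwards [hM0] with x hx
  rw [smul_smul, ← RCLike.ofReal_mul, mul_div_cancel₀ _ hx]

theorem memLp_weightedMeasure_div_smul (hM : Measurable M) (hN : Measurable N)
    (hM0 : ∀ᵐ x ∂μ, M x ≠ 0) (hN0 : ∀ᵐ x ∂μ, N x ≠ 0) (v : Lp E 2 (weightedMeasure μ N)) :
    MemLp (fun x => ((N x / M x : ℝ) : 𝕜) • v x) 2 (weightedMeasure μ M) := by
  have hac : weightedMeasure μ M ≪ weightedMeasure μ N := by
    rw [← Measure.ae_le_iff_absolutelyContinuous, ae_weightedMeasure hM hM0,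
      ae_weightedMeasure hN hN0]
  refine ⟨((RCLike.measurable_ofReal.comp (hN.div hM)).aestronglyMeasurable).smul
    ((Lp.aestronglyMeasurable v).mono_ac hac), ?_⟩
  rw [eLpNorm_weightedMeasure_div_smul hM hN hM0]
  exact Lp.eLpNorm_lt_top v

variable (𝕜)

def weightedLpMul (hM : Measurable M) (hN : Measurable N) (hM0 : ∀ᵐ x ∂μ, M x ≠ 0)
    (hN0 : ∀ᵐ x ∂μ, N x ≠ 0) (v : Lp E 2 (weightedMeasure μ N)) :
    Lp E 2 (weightedMeasure μ M) :=
  (memLp_weightedMeasure_div_smul (𝕜 := 𝕜) hM hN hM0 hN0 v).toLp _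

theorem coeFn_weightedLpMul (hM : Measurable M) (hN : Measurable N) (hM0 : ∀ᵐ x ∂μ, M x ≠ 0)
    (hN0 : ∀ᵐ x ∂μ, N x ≠ 0) (v : Lp E 2 (weightedMeasure μ N)) :
    weightedLpMul 𝕜 hM hN hM0 hN0 v =ᵐ[μ] fun x => ((N x / M x : ℝ) : 𝕜) • v x := by
  rw [Filter.EventuallyEq, ← ae_weightedMeasure hM hM0]
  exact MemLp.coeFn_toLp _

theorem weightedLpMul_add (hM : Measurable M) (hN : Measurable N) (hM0 : ∀ᵐ x ∂μ, M x ≠ 0)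
    (hN0 : ∀ᵐ x ∂μ, N x ≠ 0) (v w : Lp E 2 (weightedMeasure μ N)) :
    weightedLpMul 𝕜 hM hN hM0 hN0 (v + w) =
      weightedLpMul 𝕜 hM hN hM0 hN0 v + weightedLpMul 𝕜 hM hN hM0 hN0 w := by
  set T := weightedLpMul (E := E) 𝕜 hM hN hM0 hN0
  refine Lp.ext ?_
  rw [Filter.EventuallyEq, ae_weightedMeasure hM hM0]
  filter_upwards [coeFn_weightedLpMul 𝕜 hM hN hM0 hN0 (v + w),
    coeFn_weightedLpMul 𝕜 hM hN hM0 hN0 v, coeFn_weightedLpMul 𝕜 hM hN hM0 hN0 w,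
    (Lp.coeFn_add (T v) (T w)).filter_mono (ae_weightedMeasure hM hM0).ge,
    (Lp.coeFn_add v w).filter_mono (ae_weightedMeasure hN hN0).ge] with x h h₁ h₂ hT hvw
  rw [hT, Pi.add_apply, h, h₁, h₂, hvw, Pi.add_apply, smul_add]

theorem weightedLpMul_smul (hM : Measurable M) (hN : Measurable N) (hM0 : ∀ᵐ x ∂μ, M x ≠ 0)
    (hN0 : ∀ᵐ x ∂μ, N x ≠ 0) (c : 𝕜) (v : Lp E 2 (weightedMeasure μ N)) :
    weightedLpMul 𝕜 hM hN hM0 hN0 (c • v) = c • weightedLpMul 𝕜 hM hN hM0 hN0 v := by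
  set T := weightedLpMul (E := E) 𝕜 hM hN hM0 hN0
  refine Lp.ext ?_
  rw [Filter.EventuallyEq, ae_weightedMeasure hM hM0]
  filter_upwards [coeFn_weightedLpMul 𝕜 hM hN hM0 hN0 (c • v),
    coeFn_weightedLpMul 𝕜 hM hN hM0 hN0 v,
    (Lp.coeFn_smul c (T v)).filter_mono (ae_weightedMeasure hM hM0).ge,
    (Lp.coeFn_smul c v).filter_mono (ae_weightedMeasure hN hN0).ge] with x h h₁ hT hcv
  rw [hT, Pi.smul_apply, h, h₁, hcv, Pi.smul_apply, smul_comm]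

theorem weightedLpMul_weightedLpMul (hM : Measurable M) (hN : Measurable N)
    (hM0 : ∀ᵐ x ∂μ, M x ≠ 0) (hN0 : ∀ᵐ x ∂μ, N x ≠ 0) (v : Lp E 2 (weightedMeasure μ N)) :
    weightedLpMul 𝕜 hN hM hN0 hM0 (weightedLpMul 𝕜 hM hN hM0 hN0 v) = v := by
  refine Lp.ext ?_
  rw [Filter.EventuallyEq, ae_weightedMeasure hN hN0]
  filter_upwards [coeFn_weightedLpMul 𝕜 hN hM hN0 hM0 (weightedLpMul 𝕜 hM hN hM0 hN0 v),
    coeFn_weightedLpMul 𝕜 hM hN hM0 hN0 v, hM0, hN0] with x h h₁ hMx hNx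
  rw [h, h₁, smul_smul, ← RCLike.ofReal_mul, show M x / N x * (N x / M x) = 1 by field_simp,
    RCLike.ofReal_one, one_smul]

theorem norm_weightedLpMul (hM : Measurable M) (hN : Measurable N) (hM0 : ∀ᵐ x ∂μ, M x ≠ 0)
    (hN0 : ∀ᵐ x ∂μ, N x ≠ 0) (v : Lp E 2 (weightedMeasure μ N)) :
    ‖weightedLpMul 𝕜 hM hN hM0 hN0 v‖ = ‖v‖ := by
  rw [weightedLpMul, Lp.norm_toLp, eLpNorm_weightedMeasure_div_smul hM hN hM0, Lp.norm_def]

def weightedLpEquiv (hM : Measurable M) (hN : Measurable N) (hM0 : ∀ᵐ x ∂μ, M x ≠ 0)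
    (hN0 : ∀ᵐ x ∂μ, N x ≠ 0) :
    Lp E 2 (weightedMeasure μ N) ≃ₗᵢ[𝕜] Lp E 2 (weightedMeasure μ M) where
  toFun := weightedLpMul 𝕜 hM hN hM0 hN0
  invFun := weightedLpMul 𝕜 hN hM hN0 hM0
  map_add' := weightedLpMul_add 𝕜 hM hN hM0 hN0
  map_smul' := weightedLpMul_smul 𝕜 hM hN hM0 hN0
  left_inv := weightedLpMul_weightedLpMul 𝕜 hM hN hM0 hN0
  right_inv := weightedLpMul_weightedLpMul 𝕜 hN hM hN0 hM0
  norm_map' := norm_weightedLpMul 𝕜 hM hN hM0 hN0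

end NormedSpace

theorem inner_weightedLpEquiv_inv {E : Type*} [NormedAddCommGroup E] [InnerProductSpace 𝕜 E]
    (hM : Measurable M) (hM0 : ∀ᵐ x ∂μ, M x ≠ 0)
    (v : Lp E 2 (weightedMeasure μ M⁻¹)) (w : Lp E 2 (weightedMeasure μ M)) :
    inner 𝕜 (weightedLpEquiv 𝕜 hM hM.inv hM0 (hM0.mono fun _ => inv_ne_zero) v) w =
      ∫ x, inner 𝕜 (v x) (w x) ∂μ := by
  have hM0' : ∀ᵐ x ∂μ, M⁻¹ x ≠ 0 := hM0.mono fun _ => inv_ne_zero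
  change inner 𝕜 (weightedLpMul 𝕜 hM hM.inv hM0 hM0' v) w = _
  rw [L2.inner_def, integral_weightedMeasure hM]
  refine integral_congr_ae ?_
  filter_upwards [coeFn_weightedLpMul 𝕜 hM hM.inv hM0 hM0' v, hM0] with x hv hx
  rw [hv, inner_smul_left, RCLike.conj_ofReal, RCLike.real_smul_eq_coe_mul, ← mul_assoc,
    ← RCLike.ofReal_mul, Pi.inv_apply, show M x ^ 2 * ((M x)⁻¹ / M x) = 1 by field_simp,
    RCLike.ofReal_one, one_mul]

end Weighted

theorem one_le_smoothedNorm {n : ℕ} (ξ : EuclideanSpace ℝ (Fin n)) : 1 ≤ smoothedNorm ξ :=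
  Real.one_le_sqrt.2 (le_add_of_nonneg_right (sq_nonneg _))

theorem measurable_smoothedNorm {n : ℕ} : Measurable (smoothedNorm (n := n)) := by
  unfold smoothedNorm; fun_prop

/-- Duality of `H^φ` and `H^{1/φ}` (in the Fourier-side model, where the sesquilinear
pairing `(w₁,w₂) ↦ ∫ w₁ conj(w₂) dx` becomes, by Parseval, `∫ ŵ₁(ξ) conj(ŵ₂(ξ)) dξ`):
the map sending `v ∈ H^{1/φ}` to the functional `w ↦ (w,v)` is an anti-linear
isometric bijection of `H^{1/φ}` onto the dual of `H^φ`. -/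
theorem horm_duality (n : ℕ) (φ : ℝ → ℝ) (hφ : IsRO φ) :
    ∃ Φ : Lp ℂ 2 (hormMeasure n (fun t => (φ t)⁻¹)) →
        (Lp ℂ 2 (hormMeasure n φ) →L[ℂ] ℂ),
      Function.Bijective Φ ∧
      (∀ v, ‖Φ v‖ = ‖v‖) ∧
      (∀ v₁ v₂, Φ (v₁ + v₂) = Φ v₁ + Φ v₂) ∧
      (∀ (a : ℂ) v, Φ (a • v) = (starRingEnd ℂ a) • Φ v) ∧
      ∀ v w, Φ v w =
        ∫ ξ, (w : EuclideanSpace ℝ (Fin n) → ℂ) ξ *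
          (starRingEnd ℂ) ((v : EuclideanSpace ℝ (Fin n) → ℂ) ξ) := by
  obtain ⟨hφ_meas, hφ_pos, -⟩ := hφ
  set M : EuclideanSpace ℝ (Fin n) → ℝ := fun ξ => φ (smoothedNorm ξ)
  have hM : Measurable M :=
    hφ_meas.comp (measurable_smoothedNorm.subtype_mk (h := fun ξ => one_le_smoothedNorm ξ))
  have hM0 : ∀ᵐ ξ, M ξ ≠ 0 := ae_of_all _ fun ξ => (hφ_pos _ (one_le_smoothedNorm ξ)).ne'
  let Φ := (weightedLpEquiv ℂ hM hM.inv hM0 (hM0.mono fun _ => inv_ne_zero)).trans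
    (InnerProductSpace.toDual ℂ (Lp ℂ 2 (weightedMeasure volume M)))
  refine ⟨Φ, Φ.bijective, Φ.norm_map, map_add Φ, map_smulₛₗ Φ, fun v w => ?_⟩
  exact (inner_weightedLpEquiv_inv hM hM0 v w).trans
    (integral_congr_ae (ae_of_all _ fun ξ => RCLike.inner_apply _ _))
end
end

section
/- Let φ be RO-varying with Matuszewska indices σ₀(φ), σ₁(φ), let s₀ < σ₀(φ) and s₁ > σ₁(φ), and define ψ(t) = t^{-s₀/(s₁-s₀)} φ(t^{1/(s₁-s₀)}) for t ≥ 1 and ψ(t) = φ(1) for 0 < t < 1. Then ψ is pseudo-concave near infinity, i.e. there is a positive concave function ψ₁ with ψ(t) ≍ ψ₁(t) for large t. -/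
/-!
Since `s₀ < σ₀(φ)` and `s₁ > σ₁(φ)`, some `c` gives `c⁻¹ λ^{s₀} ≤ φ(λt)/φ(t) ≤ c λ^{s₁}` for
`t, λ ≥ 1`. (This needs the sets defining the indices to be nonempty, as `sSup ∅ = 0`; iterating
the local RO bound `⌈log_a λ⌉` times gives polynomial bounds.) Substituting `λ ↦ λ^{1/(s₁-s₀)}`
yields `c⁻¹ ≤ ψ(λt)/ψ(t) ≤ c λ`: `ψ` is almost increasing and `ψ(t)/t` is almost decreasing.
Such a `ψ` is equivalent to the concave function `inf_{s ≥ 1} ψ(s) (1 + t/s)`: every affine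
function in the infimum dominates `ψ` up to a constant, and the one with `s = t` is `2ψ` at `t`.
-/

open MeasureTheory Set

noncomputable section

/-- The lower Matuszewska index `σ₀(φ)`. -/
def matuszewskaLower (φ : ℝ → ℝ) : ℝ :=
  sSup {s : ℝ | ∃ c : ℝ, 1 ≤ c ∧ ∀ t : ℝ, 1 ≤ t → ∀ l : ℝ, 1 ≤ l →
    c⁻¹ * l ^ s ≤ φ (l * t) / φ t}

/-- The upper Matuszewska index `σ₁(φ)`. -/
def matuszewskaUpper (φ : ℝ → ℝ) : ℝ :=
  sInf {s : ℝ | ∃ c : ℝ, 1 ≤ c ∧ ∀ t : ℝ, 1 ≤ t → ∀ l : ℝ, 1 ≤ l →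
    φ (l * t) / φ t ≤ c * l ^ s}

open Real Filter

-- `matuszewskaLower φ` and `matuszewskaUpper φ` are the `sSup` and `sInf` of these exponents.
def IsLowerExponent (φ : ℝ → ℝ) (s : ℝ) : Prop :=
  ∃ c : ℝ, 1 ≤ c ∧ ∀ t : ℝ, 1 ≤ t → ∀ l : ℝ, 1 ≤ l → c⁻¹ * l ^ s ≤ φ (l * t) / φ t

def IsUpperExponent (φ : ℝ → ℝ) (s : ℝ) : Prop :=
  ∃ c : ℝ, 1 ≤ c ∧ ∀ t : ℝ, 1 ≤ t → ∀ l : ℝ, 1 ≤ l → φ (l * t) / φ t ≤ c * l ^ s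

lemma le_of_rpow_le_mul_rpow {a b C : ℝ} (h : ∀ l : ℝ, 1 ≤ l → l ^ a ≤ C * l ^ b) : a ≤ b := by
  by_contra! hba
  obtain ⟨l, hCl, hl⟩ := (((tendsto_rpow_atTop (sub_pos.2 hba)).eventually_gt_atTop C).and
    (eventually_ge_atTop 1)).exists
  have hl₀ : 0 < l := one_pos.trans_le hl
  have : l ^ (a - b) * l ^ b ≤ C * l ^ b := by rw [← rpow_add hl₀, sub_add_cancel]; exact h l hl
  exact (le_of_mul_le_mul_right this (rpow_pos_of_pos hl₀ b)).not_gt hCl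

namespace IsLowerExponent

variable {φ : ℝ → ℝ} {s s' : ℝ}

lemma mono (h : IsLowerExponent φ s) (hs : s' ≤ s) : IsLowerExponent φ s' := by
  obtain ⟨c, hc, hb⟩ := h
  refine ⟨c, hc, fun t ht l hl => le_trans ?_ (hb t ht l hl)⟩
  gcongr

lemma le_of_isUpperExponent (hl : IsLowerExponent φ s) (hu : IsUpperExponent φ s') : s ≤ s' := by
  obtain ⟨c, hc, hlb⟩ := hl
  obtain ⟨C, -, hub⟩ := hu
  refine le_of_rpow_le_mul_rpow (C := c * C) fun l hl => ?_
  have := (hlb 1 le_rfl l hl).trans (hub 1 le_rfl l hl)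
  rwa [inv_mul_le_iff₀ (one_pos.trans_le hc), ← mul_assoc] at this

end IsLowerExponent

lemma IsUpperExponent.mono {φ : ℝ → ℝ} {s s' : ℝ} (h : IsUpperExponent φ s) (hs : s ≤ s') :
    IsUpperExponent φ s' := by
  obtain ⟨c, hc, hb⟩ := h
  refine ⟨c, hc, fun t ht l hl => (hb t ht l hl).trans ?_⟩
  gcongr

lemma ratio_mem_Icc_pow_of_mem_Icc {φ : ℝ → ℝ} {a c : ℝ} (hpos : ∀ t : ℝ, 1 ≤ t → 0 < φ t)
    (ha : 1 ≤ a) (hc : 0 < c)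
    (hloc : ∀ t : ℝ, 1 ≤ t → ∀ l ∈ Icc 1 a, φ (l * t) / φ t ∈ Icc c⁻¹ c) (n : ℕ) :
    ∀ t : ℝ, 1 ≤ t → ∀ l ∈ Icc 1 (a ^ n), φ (l * t) / φ t ∈ Icc (c ^ n)⁻¹ (c ^ n) := by
  induction n with
  | zero =>
    intro t ht l hl
    obtain rfl : l = 1 := le_antisymm (by simpa using hl.2) hl.1
    simp [(hpos t ht).ne']
  | succ n ih =>
    intro t ht l ⟨hl₁, hl₂⟩
    have han : 1 ≤ a ^ n := one_le_pow₀ ha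
    set m := max 1 (l / a ^ n)
    have hm₀ : 0 < m := one_pos.trans_le (le_max_left _ _)
    have hm : m ∈ Icc 1 a :=
      ⟨le_max_left _ _, max_le ha ((div_le_iff₀ (by positivity)).2 (by rwa [← pow_succ']))⟩
    have hlm : l / m ∈ Icc 1 (a ^ n) :=
      ⟨(one_le_div hm₀).2 (max_le hl₁ (div_le_self (by linarith) han)),
        (div_le_comm₀ hm₀ (by positivity)).2 (le_max_right _ _)⟩
    have hlmt : 1 ≤ l / m * t := one_le_mul_of_one_le_of_one_le hlm.1 ht
    have hsplit : φ (l * t) / φ t =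
        φ (m * (l / m * t)) / φ (l / m * t) * (φ (l / m * t) / φ t) := by
      rw [div_mul_div_cancel₀ (hpos _ hlmt).ne', ← mul_assoc, mul_div_cancel₀ _ hm₀.ne']
    obtain ⟨h₁, h₂⟩ := hloc _ hlmt m hm
    obtain ⟨h₃, h₄⟩ := ih t ht _ hlm
    rw [hsplit, pow_succ', mul_inv]
    exact ⟨mul_le_mul h₁ h₃ (by positivity) ((inv_pos.2 hc).le.trans h₁),
      mul_le_mul h₂ h₄ ((by positivity : (0:ℝ) ≤ (c ^ n)⁻¹).trans h₃) hc.le⟩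

lemma le_pow_natCeil_logb {a l : ℝ} (ha : 1 < a) (hl : 0 < l) : l ≤ a ^ ⌈logb a l⌉₊ := by
  rw [← rpow_natCast, ← logb_le_iff_le_rpow ha hl]
  exact Nat.le_ceil _

lemma pow_natCeil_logb_le {a c l : ℝ} (ha : 1 < a) (hc : 1 ≤ c) (hl : 1 ≤ l) :
    c ^ ⌈logb a l⌉₊ ≤ c * l ^ logb a c := by
  have hc₀ : 0 < c := one_pos.trans_le hc
  have hl₀ : 0 < l := one_pos.trans_le hl
  have hswap : c ^ logb a l = l ^ logb a c := by
    rw [rpow_def_of_pos hc₀, rpow_def_of_pos hl₀, logb, logb]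
    ring_nf
  calc c ^ ⌈logb a l⌉₊ = c ^ (⌈logb a l⌉₊ : ℝ) := (rpow_natCast c _).symm
    _ ≤ c ^ (logb a l + 1) :=
      rpow_le_rpow_of_exponent_le hc (Nat.ceil_lt_add_one (logb_nonneg ha hl)).le
    _ = c * l ^ logb a c := by rw [rpow_add_one hc₀.ne', hswap, mul_comm]

namespace IsRO

variable {φ : ℝ → ℝ}

lemma exists_isLowerExponent_isUpperExponent (hφ : IsRO φ) :
    ∃ σ : ℝ, IsLowerExponent φ (-σ) ∧ IsUpperExponent φ σ := by
  obtain ⟨-, hpos, a, ha, c, hc, hloc⟩ := hφ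
  have hbound : ∀ t : ℝ, 1 ≤ t → ∀ l : ℝ, 1 ≤ l →
      φ (l * t) / φ t ∈ Icc (c * l ^ logb a c)⁻¹ (c * l ^ logb a c) := by
    intro t ht l hl
    have hn := pow_natCeil_logb_le ha hc hl
    obtain ⟨h₁, h₂⟩ := ratio_mem_Icc_pow_of_mem_Icc hpos ha.le (one_pos.trans_le hc) hloc _ t ht l
      ⟨hl, le_pow_natCeil_logb ha (one_pos.trans_le hl)⟩
    have hpow : 0 < c ^ ⌈logb a l⌉₊ := pow_pos (one_pos.trans_le hc) _
    exact ⟨(inv_anti₀ hpow hn).trans h₁, h₂.trans hn⟩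
  refine ⟨logb a c, ⟨c, hc, fun t ht l hl => ?_⟩, c, hc, fun t ht l hl => (hbound t ht l hl).2⟩
  rw [rpow_neg (one_pos.trans_le hl).le, ← mul_inv]
  exact (hbound t ht l hl).1

lemma isLowerExponent_of_lt_matuszewskaLower (hφ : IsRO φ) {s : ℝ}
    (hs : s < matuszewskaLower φ) : IsLowerExponent φ s := by
  obtain ⟨σ, hσ, -⟩ := hφ.exists_isLowerExponent_isUpperExponent
  obtain ⟨s', hs', hss'⟩ := exists_lt_of_lt_csSup (s := {s | IsLowerExponent φ s}) ⟨_, hσ⟩ hs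
  exact hs'.mono hss'.le

lemma isUpperExponent_of_matuszewskaUpper_lt (hφ : IsRO φ) {s : ℝ}
    (hs : matuszewskaUpper φ < s) : IsUpperExponent φ s := by
  obtain ⟨σ, -, hσ⟩ := hφ.exists_isLowerExponent_isUpperExponent
  obtain ⟨s', hs', hss'⟩ := exists_lt_of_csInf_lt (s := {s | IsUpperExponent φ s}) ⟨_, hσ⟩ hs
  exact hs'.mono hss'.le

lemma matuszewskaLower_le_matuszewskaUpper (hφ : IsRO φ) :
    matuszewskaLower φ ≤ matuszewskaUpper φ := by
  obtain ⟨σ, hl, hu⟩ := hφ.exists_isLowerExponent_isUpperExponent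
  exact csSup_le ⟨_, hl⟩ fun a ha =>
    le_csInf ⟨_, hu⟩ fun b hb => IsLowerExponent.le_of_isUpperExponent ha hb

end IsRO

section Rescaling

variable {φ ψ : ℝ → ℝ} {α β : ℝ}

lemma ratio_eq_of_eq_rpow_mul_comp_rpow (hψ : ∀ t : ℝ, 1 ≤ t → ψ t = t ^ α * φ (t ^ β))
    {t l : ℝ} (ht : 1 ≤ t) (hl : 1 ≤ l) :
    ψ (l * t) / ψ t = l ^ α * (φ (l ^ β * t ^ β) / φ (t ^ β)) := by
  have ht₀ : 0 < t := one_pos.trans_le ht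
  have hl₀ : 0 < l := one_pos.trans_le hl
  rw [hψ _ (one_le_mul_of_one_le_of_one_le hl ht), hψ t ht, mul_rpow hl₀.le ht₀.le,
    mul_rpow hl₀.le ht₀.le, mul_comm (l ^ α), mul_assoc,
    mul_div_mul_left _ _ (rpow_pos_of_pos ht₀ α).ne', mul_div_assoc]

lemma IsLowerExponent.of_eq_rpow_mul_comp_rpow {s : ℝ} (h : IsLowerExponent φ s) (hβ : 0 ≤ β)
    (hψ : ∀ t : ℝ, 1 ≤ t → ψ t = t ^ α * φ (t ^ β)) : IsLowerExponent ψ (α + β * s) := by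
  obtain ⟨c, hc, hb⟩ := h
  refine ⟨c, hc, fun t ht l hl => ?_⟩
  have hl₀ : 0 < l := one_pos.trans_le hl
  rw [ratio_eq_of_eq_rpow_mul_comp_rpow hψ ht hl, rpow_add hl₀, rpow_mul hl₀.le,
    mul_left_comm]
  gcongr
  exact hb _ (one_le_rpow ht hβ) _ (one_le_rpow hl hβ)

lemma IsUpperExponent.of_eq_rpow_mul_comp_rpow {s : ℝ} (h : IsUpperExponent φ s) (hβ : 0 ≤ β)
    (hψ : ∀ t : ℝ, 1 ≤ t → ψ t = t ^ α * φ (t ^ β)) : IsUpperExponent ψ (α + β * s) := by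
  obtain ⟨c, hc, hb⟩ := h
  refine ⟨c, hc, fun t ht l hl => ?_⟩
  have hl₀ : 0 < l := one_pos.trans_le hl
  rw [ratio_eq_of_eq_rpow_mul_comp_rpow hψ ht hl, rpow_add hl₀, rpow_mul hl₀.le,
    mul_left_comm]
  gcongr
  exact hb _ (one_le_rpow ht hβ) _ (one_le_rpow hl hβ)

end Rescaling

section AlmostMonotone

variable {f : ℝ → ℝ}

lemma IsLowerExponent.exists_le_mul_of_le (hf : ∀ t : ℝ, 1 ≤ t → 0 < f t)
    (h : IsLowerExponent f 0) :
    ∃ c : ℝ, 1 ≤ c ∧ ∀ s t : ℝ, 1 ≤ s → s ≤ t → f s ≤ c * f t := by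
  obtain ⟨c, hc, hb⟩ := h
  refine ⟨c, hc, fun s t hs hst => ?_⟩
  have hs₀ : 0 < s := one_pos.trans_le hs
  have := hb s hs (t / s) ((one_le_div hs₀).2 hst)
  rwa [rpow_zero, mul_one, div_mul_cancel₀ _ hs₀.ne', le_div_iff₀ (hf s hs),
    inv_mul_le_iff₀ (one_pos.trans_le hc)] at this

lemma IsUpperExponent.exists_le_mul_div_mul_of_le (hf : ∀ t : ℝ, 1 ≤ t → 0 < f t)
    (h : IsUpperExponent f 1) :
    ∃ c : ℝ, 1 ≤ c ∧ ∀ s t : ℝ, 1 ≤ s → s ≤ t → f t ≤ c * (t / s) * f s := by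
  obtain ⟨c, hc, hb⟩ := h
  refine ⟨c, hc, fun s t hs hst => ?_⟩
  have hs₀ : 0 < s := one_pos.trans_le hs
  have := hb s hs (t / s) ((one_le_div hs₀).2 hst)
  rwa [rpow_one, div_mul_cancel₀ _ hs₀.ne', div_le_iff₀ (hf s hs)] at this

end AlmostMonotone

def concaveEnvelope (ψ : ℝ → ℝ) (t : ℝ) : ℝ :=
  ⨅ s : Ici (1 : ℝ), ψ s * (1 + t / s)

section ConcaveEnvelope

variable {ψ : ℝ → ℝ}

lemma concaveEnvelope_le (hψ : ∀ s : ℝ, 1 ≤ s → 0 ≤ ψ s) {t s : ℝ} (ht : 0 ≤ t) (hs : 1 ≤ s) :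
    concaveEnvelope ψ t ≤ ψ s * (1 + t / s) := by
  refine ciInf_le ⟨0, ?_⟩ (⟨s, hs⟩ : Ici (1 : ℝ))
  rintro _ ⟨⟨r, hr⟩, rfl⟩
  have := hψ r hr
  have : (0 : ℝ) ≤ t / r := div_nonneg ht (zero_le_one.trans hr)
  positivity

lemma concaveOn_concaveEnvelope (hψ : ∀ s : ℝ, 1 ≤ s → 0 ≤ ψ s) :
    ConcaveOn ℝ (Ici 0) (concaveEnvelope ψ) := by
  refine ⟨convex_Ici 0, fun x hx y hy a b ha hb hab => le_ciInf fun ⟨s, hs⟩ => ?_⟩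
  have e : ψ s * (1 + (a • x + b • y) / s) =
      a * (ψ s * (1 + x / s)) + b * (ψ s * (1 + y / s)) := by
    simp only [smul_eq_mul]
    linear_combination (ψ s) * hab.symm
  rw [e, smul_eq_mul, smul_eq_mul]
  gcongr
  · exact concaveEnvelope_le hψ hx hs
  · exact concaveEnvelope_le hψ hy hs

lemma concaveEnvelope_le_two_mul (hψ : ∀ s : ℝ, 1 ≤ s → 0 ≤ ψ s) {t : ℝ} (ht : 1 ≤ t) :
    concaveEnvelope ψ t ≤ 2 * ψ t := by
  have := concaveEnvelope_le hψ (zero_le_one.trans ht) ht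
  rwa [div_self (one_pos.trans_le ht).ne', mul_comm, one_add_one_eq_two] at this

lemma le_mul_concaveEnvelope (hψ : ∀ s : ℝ, 1 ≤ s → 0 ≤ ψ s) {c₀ c₁ : ℝ} (hc₀ : 0 ≤ c₀)
    (hc₁ : 0 ≤ c₁) (hinc : ∀ s t : ℝ, 1 ≤ s → s ≤ t → ψ s ≤ c₀ * ψ t)
    (hdec : ∀ s t : ℝ, 1 ≤ s → s ≤ t → ψ t ≤ c₁ * (t / s) * ψ s) {t : ℝ} (ht : 1 ≤ t) :
    ψ t ≤ (c₀ + c₁) * concaveEnvelope ψ t := by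
  rw [concaveEnvelope, Real.mul_iInf_of_nonneg (add_nonneg hc₀ hc₁)]
  refine le_ciInf fun ⟨s, hs⟩ => show ψ t ≤ (c₀ + c₁) * (ψ s * (1 + t / s)) from ?_
  have hψs := hψ s hs
  have hts : 0 ≤ t / s := div_nonneg (zero_le_one.trans ht) (zero_le_one.trans hs)
  rcases le_total s t with hst | hts'
  · have := hdec s t hs hst
    nlinarith [mul_nonneg hc₀ hψs, mul_nonneg (mul_nonneg hc₀ hψs) hts]
  · have := hinc t s ht hts'
    nlinarith [mul_nonneg (mul_nonneg hc₀ hψs) hts, mul_nonneg hc₁ hψs,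
      mul_nonneg (mul_nonneg hc₁ hψs) hts]

lemma IsLowerExponent.exists_concaveOn_equiv (hψ : ∀ t : ℝ, 1 ≤ t → 0 < ψ t)
    (h₀ : IsLowerExponent ψ 0) (h₁ : IsUpperExponent ψ 1) :
    ∃ ψ₁ : ℝ → ℝ, ConcaveOn ℝ (Ici 1) ψ₁ ∧ (∀ t : ℝ, 1 ≤ t → 0 < ψ₁ t) ∧
      ∃ c : ℝ, 1 ≤ c ∧ ∀ t : ℝ, 1 ≤ t → c⁻¹ * ψ₁ t ≤ ψ t ∧ ψ t ≤ c * ψ₁ t := by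
  obtain ⟨c₀, hc₀, hinc⟩ := h₀.exists_le_mul_of_le hψ
  obtain ⟨c₁, hc₁, hdec⟩ := h₁.exists_le_mul_div_mul_of_le hψ
  have hψ' : ∀ t : ℝ, 1 ≤ t → 0 ≤ ψ t := fun t ht => (hψ t ht).le
  have hψ_le : ∀ t : ℝ, 1 ≤ t → ψ t ≤ (c₀ + c₁) * concaveEnvelope ψ t := fun t ht =>
    le_mul_concaveEnvelope hψ' (by linarith) (by linarith) hinc hdec ht
  have hpos : ∀ t : ℝ, 1 ≤ t → 0 < concaveEnvelope ψ t := fun t ht =>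
    pos_of_mul_pos_right ((hψ t ht).trans_le (hψ_le t ht)) (by linarith)
  have hc : (0 : ℝ) < max (c₀ + c₁) 2 := lt_max_of_lt_right two_pos
  refine ⟨concaveEnvelope ψ,
    (concaveOn_concaveEnvelope hψ').subset (Ici_subset_Ici.2 zero_le_one) (convex_Ici 1),
    hpos, max (c₀ + c₁) 2, le_max_of_le_right one_le_two, fun t ht => ⟨?_, ?_⟩⟩
  · rw [inv_mul_le_iff₀ hc]
    exact (concaveEnvelope_le_two_mul hψ' ht).trans
      (mul_le_mul_of_nonneg_right (le_max_right _ _) (hψ' t ht))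
  · exact (hψ_le t ht).trans (mul_le_mul_of_nonneg_right (le_max_left _ _) (hpos t ht).le)

end ConcaveEnvelope

theorem interp_param_pseudoConcave_general (φ : ℝ → ℝ) (hφ : IsRO φ)
    (s₀ s₁ : ℝ) (hs₀ : s₀ < matuszewskaLower φ) (hs₁ : matuszewskaUpper φ < s₁)
    (ψ : ℝ → ℝ)
    (hψ₁ : ∀ t : ℝ, 1 ≤ t → ψ t = t ^ (-s₀ / (s₁ - s₀)) * φ (t ^ (1 / (s₁ - s₀)))) :
    ∃ T : ℝ, 0 < T ∧ ∃ ψ₁ : ℝ → ℝ,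
      ConcaveOn ℝ (Set.Ici T) ψ₁ ∧ (∀ t : ℝ, T ≤ t → 0 < ψ₁ t) ∧
      ∃ c : ℝ, 1 ≤ c ∧ ∀ t : ℝ, T ≤ t →
        c⁻¹ * ψ₁ t ≤ ψ t ∧ ψ t ≤ c * ψ₁ t := by
  have hρ : 0 < s₁ - s₀ :=
    sub_pos.2 ((hs₀.trans_le hφ.matuszewskaLower_le_matuszewskaUpper).trans hs₁)
  have hψ : ∀ t : ℝ, 1 ≤ t → 0 < ψ t := fun t ht => by
    rw [hψ₁ t ht]
    exact mul_pos (rpow_pos_of_pos (one_pos.trans_le ht) _)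
      (hφ.2.1 _ (one_le_rpow ht (by positivity)))
  have h₀ : IsLowerExponent ψ 0 := by
    convert (hφ.isLowerExponent_of_lt_matuszewskaLower hs₀).of_eq_rpow_mul_comp_rpow
      (by positivity) hψ₁ using 1
    field_simp; ring
  have h₁ : IsUpperExponent ψ 1 := by
    convert (hφ.isUpperExponent_of_matuszewskaUpper_lt hs₁).of_eq_rpow_mul_comp_rpow
      (by positivity) hψ₁ using 1
    field_simp; ring
  exact ⟨1, one_pos, h₀.exists_concaveOn_equiv hψ h₁⟩

/-- For `φ ∈ RO`, `s₀ < σ₀(φ)`, `s₁ > σ₁(φ)`, the interpolation parameter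
`ψ(t) = t^{-s₀/(s₁-s₀)} φ(t^{1/(s₁-s₀)})` for `t ≥ 1`, `ψ(t) = φ(1)` for `0 < t < 1`,
is pseudo-concave near infinity: there is a positive concave function `ψ₁` with
`ψ ≍ ψ₁` for large `t`. -/
theorem interp_param_pseudoConcave (φ : ℝ → ℝ) (hφ : IsRO φ)
    (s₀ s₁ : ℝ) (hs₀ : s₀ < matuszewskaLower φ) (hs₁ : matuszewskaUpper φ < s₁)
    (ψ : ℝ → ℝ)
    (hψ₁ : ∀ t : ℝ, 1 ≤ t → ψ t = t ^ (-s₀ / (s₁ - s₀)) * φ (t ^ (1 / (s₁ - s₀))))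
    (hψ₂ : ∀ t : ℝ, 0 < t → t < 1 → ψ t = φ 1) :
    ∃ T : ℝ, 0 < T ∧ ∃ ψ₁ : ℝ → ℝ,
      ConcaveOn ℝ (Set.Ici T) ψ₁ ∧ (∀ t : ℝ, T ≤ t → 0 < ψ₁ t) ∧
      ∃ c : ℝ, 1 ≤ c ∧ ∀ t : ℝ, T ≤ t →
        c⁻¹ * ψ₁ t ≤ ψ t ∧ ψ t ≤ c * ψ₁ t :=
  interp_param_pseudoConcave_general φ hφ s₀ s₁ hs₀ hs₁ ψ hψ₁
end
end

section
/- Let X = [X₀,X₁] and Y = [Y₀,Y₁] be pairs of separable Hilbert spaces with continuous dense embeddings X₁ ↪ X₀ and Y₁ ↪ Y₀, and let T be a linear map on X₀ whose restrictions T : X_j → Y_j (j = 0,1) are bounded Fredholm operators with common kernel and equal index. Then for any interpolation parameter ψ, the operator T : X_ψ → Y_ψ is Fredholm with the same kernel and index, and its range equals Y_ψ ∩ T(X₀). -/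
/-!
Equal index and common kernel force `jY⁻¹(T₀ X₀) = T₁ X₁`: the dense image of `Y₁` maps onto
the finite-dimensional cokernel `Y₀ / T₀ X₀`, so `Y₁ / T₁ X₁ → Y₀ / T₀ X₀` is onto, and equal
dimensions make it injective. Hence a bounded right inverse of `T₀` on its range, composed with
a projection onto `T₀ X₀` along a complement chosen inside `jY Y₁`, maps `Y₁` into `X₁`, and by
the closed graph theorem restricts to a bounded operator there. Interpolating this pair gives
`Sψ` with `Tψ Sψ y = y` whenever `y ∈ Yψ ∩ T₀ X₀`, so the range of `Tψ` is the closed subspace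
`Yψ ∩ T₀ X₀`. Its cokernel is still `Y₀ / T₀ X₀`, because `Y₁ ⊆ Yψ` already fills it, and the
kernel, lying in `X₁ ⊆ Xψ`, is unchanged.
-/

open MeasureTheory Set

noncomputable section

/-- A bounded operator is Fredholm: finite-dimensional kernel, closed range,
finite-dimensional cokernel. -/
def IsFredholm {X Y : Type*} [NormedAddCommGroup X] [NormedSpace ℂ X]
    [NormedAddCommGroup Y] [NormedSpace ℂ Y] (T : X →L[ℂ] Y) : Prop :=
  FiniteDimensional ℂ (LinearMap.ker (T : X →ₗ[ℂ] Y)) ∧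
  IsClosed (Set.range T) ∧
  FiniteDimensional ℂ (Y ⧸ LinearMap.range (T : X →ₗ[ℂ] Y))

/-- The index of a (Fredholm) operator: `dim ker T - dim coker T`. -/
def fredholmIndex {X Y : Type*} [NormedAddCommGroup X] [NormedSpace ℂ X]
    [NormedAddCommGroup Y] [NormedSpace ℂ Y] (T : X →L[ℂ] Y) : ℤ :=
  (Module.finrank ℂ (LinearMap.ker (T : X →ₗ[ℂ] Y)) : ℤ) -
    (Module.finrank ℂ (Y ⧸ LinearMap.range (T : X →ₗ[ℂ] Y)) : ℤ)

section LinearAlgebra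

variable {R K M N E E₀ F F₀ : Type*}

theorem Submodule.comap_eq_of_finrank_quotient_eq [Field K] [AddCommGroup M] [Module K M]
    [AddCommGroup N] [Module K N] {p : Submodule K M} {q : Submodule K N} {f : M →ₗ[K] N}
    (hpq : p ≤ q.comap f) (hsurj : Function.Surjective (q.mkQ ∘ₗ f))
    [FiniteDimensional K (M ⧸ p)] (hdim : Module.finrank K (N ⧸ q) = Module.finrank K (M ⧸ p)) :
    q.comap f = p := by
  have hmapQ : Function.Surjective (p.mapQ q f hpq) := by
    intro z
    obtain ⟨x, rfl⟩ := hsurj z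
    exact ⟨p.mkQ x, rfl⟩
  have : FiniteDimensional K (N ⧸ q) := Module.Finite.of_surjective _ hmapQ
  have hinj : Function.Injective (p.mapQ q f hpq) :=
    (LinearMap.injective_iff_surjective_of_finrank_eq_finrank hdim.symm).mpr hmapQ
  refine le_antisymm (fun x hx => ?_) hpq
  rw [← Submodule.Quotient.mk_eq_zero p]
  refine hinj ?_
  simpa [Submodule.Quotient.mk_eq_zero] using hx

variable [Ring R] [AddCommGroup E] [Module R E] [AddCommGroup E₀] [Module R E₀]
  [AddCommGroup F] [Module R F] [AddCommGroup F₀] [Module R F₀]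
  {T₀ : E₀ →ₗ[R] F₀} {T : E →ₗ[R] F} {i : E →ₗ[R] E₀} {j : F →ₗ[R] F₀}

theorem LinearMap.map_ker_eq_ker_of_comp_eq (hj : Function.Injective j) (hT : T₀ ∘ₗ i = j ∘ₗ T)
    (hker : LinearMap.ker T₀ ≤ LinearMap.range i) :
    (LinearMap.ker T).map i = LinearMap.ker T₀ := by
  refine le_antisymm ?_ fun x hx => ?_
  · rw [Submodule.map_le_iff_le_comap, ← LinearMap.ker_comp, hT, LinearMap.ker_comp]
    exact Submodule.comap_mono bot_le
  · obtain ⟨x, rfl⟩ := hker hx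
    refine ⟨x, hj ?_, rfl⟩
    rw [map_zero, ← LinearMap.comp_apply, ← hT]
    exact hx

theorem LinearMap.range_eq_comap_range_of_comp_eq (hj : Function.Injective j)
    (hT : T₀ ∘ₗ i = j ∘ₗ T) {S₀ : F₀ →ₗ[R] E₀} {S : F →ₗ[R] E} (hS : S₀ ∘ₗ j = i ∘ₗ S)
    (hS₀ : ∀ y ∈ LinearMap.range T₀, T₀ (S₀ y) = y) :
    LinearMap.range T = (LinearMap.range T₀).comap j := by
  refine le_antisymm ?_ fun y hy => ⟨S y, hj ?_⟩
  · rintro _ ⟨x, rfl⟩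
    exact ⟨i x, by rw [← LinearMap.comp_apply, hT, LinearMap.comp_apply]⟩
  · rw [← LinearMap.comp_apply j T, ← hT, LinearMap.comp_apply, ← LinearMap.comp_apply i S,
      ← hS, LinearMap.comp_apply, hS₀ _ hy]

def Submodule.quotientComapEquivOfSurjective (q : Submodule R F₀) (f : F →ₗ[R] F₀)
    (hf : Function.Surjective (q.mkQ ∘ₗ f)) : (F ⧸ q.comap f) ≃ₗ[R] F₀ ⧸ q :=
  (Submodule.quotEquivOfEq _ _ (by rw [LinearMap.ker_comp, Submodule.ker_mkQ])).trans
    ((q.mkQ ∘ₗ f).quotKerEquivOfSurjective hf)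

end LinearAlgebra

section Topology

variable {𝕜 E F G : Type*} [NontriviallyNormedField 𝕜]
  [NormedAddCommGroup E] [NormedSpace 𝕜 E] [NormedAddCommGroup F] [NormedSpace 𝕜 F]
  [NormedAddCommGroup G] [NormedSpace 𝕜 G]

theorem Submodule.surjective_mkQ_comp_of_denseRange [CompleteSpace 𝕜] {W : Submodule 𝕜 E}
    (hW : IsClosed (W : Set E)) [FiniteDimensional 𝕜 (E ⧸ W)] {j : F →ₗ[𝕜] E}
    (hj : DenseRange j) : Function.Surjective (W.mkQ ∘ₗ j) := by
  have hdense : DenseRange (W.mkQ ∘ₗ j) :=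
    W.mkQ_surjective.denseRange.comp hj W.mkQL.continuous
  rw [← LinearMap.range_eq_top, ← SetLike.coe_set_eq, Submodule.top_coe,
    ← (Submodule.closed_of_finiteDimensional _).closure_eq]
  exact hdense.closure_range

theorem Submodule.exists_projection_of_surjective_mkQ_comp [CompleteSpace 𝕜] {W : Submodule 𝕜 E}
    (hW : IsClosed (W : Set E)) [FiniteDimensional 𝕜 (E ⧸ W)] {j : F →L[𝕜] E}
    (hj : Function.Surjective (W.mkQ ∘ₗ (j : F →ₗ[𝕜] E))) :
    ∃ Q : E →L[𝕜] E, (∀ y, Q y ∈ W) ∧ (∀ y ∈ W, Q y = y) ∧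
      ∀ y, y - Q y ∈ LinearMap.range (j : F →ₗ[𝕜] E) := by
  obtain ⟨σ, hσ⟩ := (W.mkQL.comp j).exists_rightInverse_of_surjective
    (LinearMap.range_eq_top.mpr hj)
  have hσ' : ∀ z, Submodule.Quotient.mk (p := W) (j (σ z)) = z := fun z => congr($hσ z)
  refine ⟨.id 𝕜 E - j.comp (σ.comp W.mkQL), fun y => ?_, fun y hy => ?_, fun y => ?_⟩
  · rw [← Submodule.Quotient.mk_eq_zero]
    simp [hσ']
  · simp [(Submodule.Quotient.mk_eq_zero W).mpr hy]
  · simp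

theorem ContinuousLinearMap.exists_comp_eq_of_range_le_of_closedComplemented [CompleteSpace E]
    [CompleteSpace F] {T : E →L[𝕜] F}
    (hR : IsClosed (LinearMap.range (T : E →ₗ[𝕜] F) : Set F))
    (hK : (LinearMap.ker (T : E →ₗ[𝕜] F)).ClosedComplemented) {Q : G →L[𝕜] F}
    (hQ : LinearMap.range (Q : G →ₗ[𝕜] F) ≤ LinearMap.range (T : E →ₗ[𝕜] F)) :
    ∃ S : G →L[𝕜] E, T.comp S = Q := by
  obtain ⟨W, hWc, hW⟩ := hK.exists_isClosed_isCompl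
  set R := LinearMap.range (T : E →ₗ[𝕜] F)
  have : CompleteSpace W := hWc.completeSpace_coe
  have : CompleteSpace R := hR.completeSpace_coe
  let t : W →L[𝕜] R := (T.comp W.subtypeL).codRestrict R fun w => LinearMap.mem_range_self _ (w : E)
  have ht : ∀ w, (t w : F) = T w := fun w => rfl
  have hker : LinearMap.ker (t : W →ₗ[𝕜] R) = ⊥ := by
    refine LinearMap.ker_eq_bot'.mpr fun w hw => Subtype.ext ?_
    have hwK : (w : E) ∈ LinearMap.ker (T : E →ₗ[𝕜] F) := by simpa [← ht] using congr($hw.1)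
    exact Submodule.disjoint_def.mp hW.disjoint _ hwK w.2
  have hrange : LinearMap.range (t : W →ₗ[𝕜] R) = ⊤ := by
    refine LinearMap.range_eq_top.mpr fun ⟨_, x, hx⟩ => ?_
    obtain ⟨k, hk, w, hw, rfl⟩ := Submodule.mem_sup.mp (hW.sup_eq_top ▸ Submodule.mem_top (x := x))
    have hk : T k = 0 := hk
    refine ⟨⟨w, hw⟩, Subtype.ext ?_⟩
    simpa [ht, hk] using hx
  let e := ContinuousLinearEquiv.ofBijective t hker hrange
  refine ⟨W.subtypeL.comp ((e.symm : _ →L[𝕜] W).comp (Q.codRestrict _ fun y => hQ ⟨y, rfl⟩)),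
    ContinuousLinearMap.ext fun y => ?_⟩
  exact congr($(e.apply_symm_apply ⟨Q y, hQ ⟨y, rfl⟩⟩).1)

theorem ContinuousLinearMap.exists_comp_eq_of_range_le_of_injective [CompleteSpace E]
    [CompleteSpace G] {j : E →L[𝕜] F} (hj : Function.Injective j) {A : G →L[𝕜] F}
    (hA : LinearMap.range (A : G →ₗ[𝕜] F) ≤ LinearMap.range (j : E →ₗ[𝕜] F)) :
    ∃ S : G →L[𝕜] E, j.comp S = A := by
  let L : G →ₗ[𝕜] E := (LinearEquiv.ofInjective (j : E →ₗ[𝕜] F) hj).symm.toLinearMap ∘ₗ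
    (A : G →ₗ[𝕜] F).codRestrict _ fun y => hA ⟨y, rfl⟩
  have hL : ∀ y, j (L y) = A y := fun y =>
    congr($((LinearEquiv.ofInjective (j : E →ₗ[𝕜] F) hj).apply_symm_apply
      ⟨A y, hA ⟨y, rfl⟩⟩).1)
  have hgraph : (L.graph : Set (G × E)) = {p | j p.2 = A p.1} := by
    ext ⟨y, x⟩
    simp only [SetLike.mem_coe, LinearMap.mem_graph_iff, Set.mem_ofPred_eq, ← hL y]
    exact ⟨fun h => h ▸ rfl, fun h => hj h⟩
  have hclosed : IsClosed (L.graph : Set (G × E)) := by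
    rw [hgraph]
    exact isClosed_eq (by fun_prop) (by fun_prop)
  exact ⟨⟨L, L.continuous_of_isClosed_graph hclosed⟩, ContinuousLinearMap.ext hL⟩

end Topology

section Fredholm

variable {X₀ X₁ Y₀ Y₁ : Type*} [NormedAddCommGroup X₀] [NormedSpace ℂ X₀] [CompleteSpace X₀]
  [NormedAddCommGroup X₁] [NormedSpace ℂ X₁] [CompleteSpace X₁]
  [NormedAddCommGroup Y₀] [NormedSpace ℂ Y₀] [CompleteSpace Y₀]
  [NormedAddCommGroup Y₁] [NormedSpace ℂ Y₁] [CompleteSpace Y₁]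

theorem IsFredholm.exists_compatible_rightInverseOn_range {jX : X₁ →L[ℂ] X₀} {jY : Y₁ →L[ℂ] Y₀}
    (hjX : Function.Injective jX) (hjY : Function.Injective jY) (hjY_dense : DenseRange jY)
    {T₀ : X₀ →L[ℂ] Y₀} {T₁ : X₁ →L[ℂ] Y₁} (hT : T₀.comp jX = jY.comp T₁)
    (hF₀ : IsFredholm T₀) (hF₁ : IsFredholm T₁)
    (hker : LinearMap.ker (T₀ : X₀ →ₗ[ℂ] Y₀) ≤ LinearMap.range (jX : X₁ →ₗ[ℂ] X₀))
    (hind : fredholmIndex T₀ = fredholmIndex T₁) :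
    ∃ (S₀ : Y₀ →L[ℂ] X₀) (S₁ : Y₁ →L[ℂ] X₁), S₀.comp jY = jX.comp S₁ ∧
      ∀ y ∈ LinearMap.range (T₀ : X₀ →ₗ[ℂ] Y₀), T₀ (S₀ y) = y := by
  unfold fredholmIndex at hind
  obtain ⟨_, hR₀, _⟩ := hF₀
  have : FiniteDimensional ℂ (Y₁ ⧸ LinearMap.range (T₁ : X₁ →ₗ[ℂ] Y₁)) := hF₁.2.2
  have hT' : (T₀ : X₀ →ₗ[ℂ] Y₀) ∘ₗ (jX : X₁ →ₗ[ℂ] X₀) = (jY : Y₁ →ₗ[ℂ] Y₀) ∘ₗ (T₁ : X₁ →ₗ[ℂ] Y₁) :=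
    LinearMap.ext fun x => congr($hT x)
  set R₀ := LinearMap.range (T₀ : X₀ →ₗ[ℂ] Y₀)
  set R₁ := LinearMap.range (T₁ : X₁ →ₗ[ℂ] Y₁)
  replace hR₀ : IsClosed (R₀ : Set Y₀) := hR₀
  have hdim : Module.finrank ℂ (Y₀ ⧸ R₀) = Module.finrank ℂ (Y₁ ⧸ R₁) := by
    have hkerX :=
      (Submodule.equivMapOfInjective _ hjX (LinearMap.ker (T₁ : X₁ →ₗ[ℂ] Y₁))).finrank_eq
    rw [LinearMap.map_ker_eq_ker_of_comp_eq hjY hT' hker] at hkerX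
    omega
  have hsurj := Submodule.surjective_mkQ_comp_of_denseRange hR₀ hjY_dense
  have hR : R₀.comap (jY : Y₁ →ₗ[ℂ] Y₀) = R₁ := by
    refine Submodule.comap_eq_of_finrank_quotient_eq ?_ hsurj hdim
    rintro _ ⟨x, rfl⟩
    exact ⟨jX x, congr($hT' x)⟩
  obtain ⟨Q, hQR₀, hQ_eq, hQ_sub⟩ := Submodule.exists_projection_of_surjective_mkQ_comp hR₀ hsurj
  obtain ⟨S₀, hS₀⟩ := ContinuousLinearMap.exists_comp_eq_of_range_le_of_closedComplemented hR₀
    (Submodule.ClosedComplemented.of_finiteDimensional _) (Q := Q)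
    (by rintro _ ⟨y, rfl⟩; exact hQR₀ y)
  have hS₀jY : LinearMap.range ((S₀.comp jY : Y₁ →L[ℂ] X₀) : Y₁ →ₗ[ℂ] X₀) ≤
      LinearMap.range (jX : X₁ →ₗ[ℂ] X₀) := by
    rintro _ ⟨y, rfl⟩
    -- `Q (jY y) ∈ R₀ ⊓ jY Y₁ = jY R₁ = T₀ (jX X₁)`, and `ker T₀ ⊆ jX X₁`.
    have hQy : Q (jY y) ∈ (R₀.comap (jY : Y₁ →ₗ[ℂ] Y₀)).map (jY : Y₁ →ₗ[ℂ] Y₀) := by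
      rw [Submodule.map_comap_eq]
      refine ⟨?_, hQR₀ _⟩
      simpa using sub_mem (LinearMap.mem_range_self (jY : Y₁ →ₗ[ℂ] Y₀) y) (hQ_sub (jY y))
    rw [hR, ← LinearMap.range_comp, ← hT', LinearMap.range_comp] at hQy
    rw [← Submodule.comap_map_eq_self hker]
    simpa [← hS₀] using hQy
  obtain ⟨S₁, hS₁⟩ := ContinuousLinearMap.exists_comp_eq_of_range_le_of_injective hjX hS₀jY
  refine ⟨S₀, S₁, hS₁.symm, fun y hy => ?_⟩
  rw [← ContinuousLinearMap.comp_apply, hS₀, hQ_eq y hy]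

end Fredholm

theorem isFredholm_and_fredholmIndex_eq_of_range_eq_comap {X₀ Xψ Y₀ Yψ : Type*}
    [NormedAddCommGroup X₀] [NormedSpace ℂ X₀] [NormedAddCommGroup Xψ] [NormedSpace ℂ Xψ] [NormedAddCommGroup Y₀]
    [NormedSpace ℂ Y₀] [NormedAddCommGroup Yψ] [NormedSpace ℂ Yψ]
    {T₀ : X₀ →L[ℂ] Y₀} {Tψ : Xψ →L[ℂ] Yψ} {iX : Xψ →L[ℂ] X₀} {iY : Yψ →L[ℂ] Y₀}
    (hF₀ : IsFredholm T₀) (hiX : Function.Injective iX)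
    (hker : (LinearMap.ker (Tψ : Xψ →ₗ[ℂ] Yψ)).map (iX : Xψ →ₗ[ℂ] X₀) =
      LinearMap.ker (T₀ : X₀ →ₗ[ℂ] Y₀))
    (hrange : LinearMap.range (Tψ : Xψ →ₗ[ℂ] Yψ) =
      (LinearMap.range (T₀ : X₀ →ₗ[ℂ] Y₀)).comap (iY : Yψ →ₗ[ℂ] Y₀))
    (hsurj : Function.Surjective
      ((LinearMap.range (T₀ : X₀ →ₗ[ℂ] Y₀)).mkQ ∘ₗ (iY : Yψ →ₗ[ℂ] Y₀))) :
    IsFredholm Tψ ∧ fredholmIndex Tψ = fredholmIndex T₀ := by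
  let eKer := (Submodule.equivMapOfInjective _ hiX _).trans (LinearEquiv.ofEq _ _ hker)
  let eCoker := (Submodule.quotEquivOfEq _ _ hrange).trans
    (Submodule.quotientComapEquivOfSurjective _ _ hsurj)
  obtain ⟨_, hR₀, _⟩ := hF₀
  refine ⟨⟨eKer.symm.finiteDimensional, ?_, eCoker.symm.finiteDimensional⟩, ?_⟩
  · change IsClosed (LinearMap.range (Tψ : Xψ →ₗ[ℂ] Yψ) : Set Yψ)
    rw [hrange]
    exact hR₀.preimage iY.continuous
  · unfold fredholmIndex
    rw [eKer.finrank_eq, eCoker.finrank_eq]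

theorem interpolation_fredholm_general
    {X₀ X₁ Xψ Y₀ Y₁ Yψ : Type*}
    [NormedAddCommGroup X₀] [InnerProductSpace ℂ X₀] [CompleteSpace X₀]
    [NormedAddCommGroup X₁] [InnerProductSpace ℂ X₁] [CompleteSpace X₁]
    [NormedAddCommGroup Xψ] [InnerProductSpace ℂ Xψ]
    [NormedAddCommGroup Y₀] [InnerProductSpace ℂ Y₀] [CompleteSpace Y₀]
    [NormedAddCommGroup Y₁] [InnerProductSpace ℂ Y₁] [CompleteSpace Y₁]
    [NormedAddCommGroup Yψ] [InnerProductSpace ℂ Yψ]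
    -- the admissible pairs: continuous dense embeddings X₁ ↪ X₀, Y₁ ↪ Y₀
    (jX : X₁ →L[ℂ] X₀) (hjX : Function.Injective jX ∧ DenseRange jX)
    (jY : Y₁ →L[ℂ] Y₀) (hjY : Function.Injective jY ∧ DenseRange jY)
    -- the interpolation spaces: X₁ ↪ Xψ ↪ X₀ compatibly, with X₁ dense in Xψ
    (kX : X₁ →L[ℂ] Xψ) (iX : Xψ →L[ℂ] X₀)
    (hiX : Function.Injective iX) (hcX : iX.comp kX = jX)
    (kY : Y₁ →L[ℂ] Yψ) (iY : Yψ →L[ℂ] Y₀)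
    (hiY : Function.Injective iY) (hcY : iY.comp kY = jY)
    -- the interpolation property of ψ for maps between (and within) the two pairs
    (hinterpYX : ∀ (S₀ : Y₀ →L[ℂ] X₀) (S₁ : Y₁ →L[ℂ] X₁),
      S₀.comp jY = jX.comp S₁ → ∃ Sψ : Yψ →L[ℂ] Xψ, S₀.comp iY = iX.comp Sψ)
    -- the operator T, bounded Fredholm on both pairs and on the ψ-spaces
    (T₀ : X₀ →L[ℂ] Y₀) (T₁ : X₁ →L[ℂ] Y₁) (hT : T₀.comp jX = jY.comp T₁)
    (Tψ : Xψ →L[ℂ] Yψ) (hTψ : T₀.comp iX = iY.comp Tψ)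
    (hF₀ : IsFredholm T₀) (hF₁ : IsFredholm T₁)
    -- common kernel and equal index
    (hker : (LinearMap.ker (T₀ : X₀ →ₗ[ℂ] Y₀) : Set X₀) ⊆ Set.range jX)
    (hind : fredholmIndex T₀ = fredholmIndex T₁) :
    IsFredholm Tψ ∧
    Submodule.map (iX : Xψ →ₗ[ℂ] X₀) (LinearMap.ker (Tψ : Xψ →ₗ[ℂ] Yψ)) =
      LinearMap.ker (T₀ : X₀ →ₗ[ℂ] Y₀) ∧
    fredholmIndex Tψ = fredholmIndex T₀ ∧
    ∀ y : Yψ, (∃ x : Xψ, Tψ x = y) ↔ ∃ x₀ : X₀, T₀ x₀ = iY y := by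
  obtain ⟨S₀, S₁, hS, hS₀⟩ :=
    IsFredholm.exists_compatible_rightInverseOn_range hjX.1 hjY.1 hjY.2 hT hF₀ hF₁ hker hind
  obtain ⟨Sψ, hSψ⟩ := hinterpYX S₀ S₁ hS
  have hTψ' : (T₀ : X₀ →ₗ[ℂ] Y₀) ∘ₗ (iX : Xψ →ₗ[ℂ] X₀) = (iY : Yψ →ₗ[ℂ] Y₀) ∘ₗ (Tψ : Xψ →ₗ[ℂ] Yψ) :=
    LinearMap.ext fun x => congr($hTψ x)
  have hkerψ := LinearMap.map_ker_eq_ker_of_comp_eq hiY hTψ' <| fun x hx => by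
    obtain ⟨x₁, rfl⟩ := hker hx
    exact ⟨kX x₁, congr($hcX x₁)⟩
  have hrange := LinearMap.range_eq_comap_range_of_comp_eq hiY hTψ'
    (S := (Sψ : Yψ →ₗ[ℂ] Xψ)) (LinearMap.ext fun y => congr($hSψ y)) hS₀
  have hsurj : Function.Surjective
      ((LinearMap.range (T₀ : X₀ →ₗ[ℂ] Y₀)).mkQ ∘ₗ (iY : Yψ →ₗ[ℂ] Y₀)) := by
    have := hF₀.2.2
    refine Function.Surjective.of_comp (g := kY) ?_
    have hsurjY := Submodule.surjective_mkQ_comp_of_denseRange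
      (W := LinearMap.range (T₀ : X₀ →ₗ[ℂ] Y₀)) hF₀.2.1 hjY.2
    rw [← hcY] at hsurjY
    exact hsurjY
  obtain ⟨hFψ, hindψ⟩ :=
    isFredholm_and_fredholmIndex_eq_of_range_eq_comap hF₀ hiX hkerψ hrange hsurj
  exact ⟨hFψ, hkerψ, hindψ, fun y => SetLike.ext_iff.mp hrange y⟩

/-- Interpolation preserves Fredholmness (Proposition 2).  Here the admissible pairs
`X = [X₀,X₁]`, `Y = [Y₀,Y₁]` of separable Hilbert spaces are given by continuous dense
embeddings `jX : X₁ ↪ X₀`, `jY : Y₁ ↪ Y₀`; the interpolation spaces `Xψ`, `Yψ` (for an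
interpolation parameter `ψ`) are intermediate Hilbert spaces
`X₁ ↪ Xψ ↪ X₀`, `Y₁ ↪ Yψ ↪ Y₀`, and the interpolation property of `ψ` is expressed by
the hypothesis `hinterp`: every linear map bounded on both pairs is bounded between the
`ψ`-spaces.  If `T` is bounded Fredholm on both pairs, with common kernel and the same
index, then `T : Xψ → Yψ` is Fredholm with the same kernel and index, and its range is
`Yψ ∩ T(X₀)`. -/
theorem interpolation_fredholm
    {X₀ X₁ Xψ Y₀ Y₁ Yψ : Type*}
    [NormedAddCommGroup X₀] [InnerProductSpace ℂ X₀] [CompleteSpace X₀]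
      [TopologicalSpace.SeparableSpace X₀]
    [NormedAddCommGroup X₁] [InnerProductSpace ℂ X₁] [CompleteSpace X₁]
      [TopologicalSpace.SeparableSpace X₁]
    [NormedAddCommGroup Xψ] [InnerProductSpace ℂ Xψ] [CompleteSpace Xψ]
    [NormedAddCommGroup Y₀] [InnerProductSpace ℂ Y₀] [CompleteSpace Y₀]
      [TopologicalSpace.SeparableSpace Y₀]
    [NormedAddCommGroup Y₁] [InnerProductSpace ℂ Y₁] [CompleteSpace Y₁]
      [TopologicalSpace.SeparableSpace Y₁]
    [NormedAddCommGroup Yψ] [InnerProductSpace ℂ Yψ] [CompleteSpace Yψ]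
    -- the admissible pairs: continuous dense embeddings X₁ ↪ X₀, Y₁ ↪ Y₀
    (jX : X₁ →L[ℂ] X₀) (hjX : Function.Injective jX ∧ DenseRange jX)
    (jY : Y₁ →L[ℂ] Y₀) (hjY : Function.Injective jY ∧ DenseRange jY)
    -- the interpolation spaces: X₁ ↪ Xψ ↪ X₀ compatibly, with X₁ dense in Xψ
    (kX : X₁ →L[ℂ] Xψ) (iX : Xψ →L[ℂ] X₀)
    (hiX : Function.Injective iX) (hkX : DenseRange kX) (hcX : iX.comp kX = jX)
    (kY : Y₁ →L[ℂ] Yψ) (iY : Yψ →L[ℂ] Y₀)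
    (hiY : Function.Injective iY) (hkY : DenseRange kY) (hcY : iY.comp kY = jY)
    -- the interpolation property of ψ for maps between (and within) the two pairs
    (hinterpXY : ∀ (S₀ : X₀ →L[ℂ] Y₀) (S₁ : X₁ →L[ℂ] Y₁),
      S₀.comp jX = jY.comp S₁ → ∃ Sψ : Xψ →L[ℂ] Yψ, S₀.comp iX = iY.comp Sψ)
    (hinterpYX : ∀ (S₀ : Y₀ →L[ℂ] X₀) (S₁ : Y₁ →L[ℂ] X₁),
      S₀.comp jY = jX.comp S₁ → ∃ Sψ : Yψ →L[ℂ] Xψ, S₀.comp iY = iX.comp Sψ)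
    (hinterpXX : ∀ (S₀ : X₀ →L[ℂ] X₀) (S₁ : X₁ →L[ℂ] X₁),
      S₀.comp jX = jX.comp S₁ → ∃ Sψ : Xψ →L[ℂ] Xψ, S₀.comp iX = iX.comp Sψ)
    (hinterpYY : ∀ (S₀ : Y₀ →L[ℂ] Y₀) (S₁ : Y₁ →L[ℂ] Y₁),
      S₀.comp jY = jY.comp S₁ → ∃ Sψ : Yψ →L[ℂ] Yψ, S₀.comp iY = iY.comp Sψ)
    -- the operator T, bounded Fredholm on both pairs and on the ψ-spaces
    (T₀ : X₀ →L[ℂ] Y₀) (T₁ : X₁ →L[ℂ] Y₁) (hT : T₀.comp jX = jY.comp T₁)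
    (Tψ : Xψ →L[ℂ] Yψ) (hTψ : T₀.comp iX = iY.comp Tψ)
    (hF₀ : IsFredholm T₀) (hF₁ : IsFredholm T₁)
    -- common kernel and equal index
    (hker : (LinearMap.ker (T₀ : X₀ →ₗ[ℂ] Y₀) : Set X₀) ⊆ Set.range jX)
    (hind : fredholmIndex T₀ = fredholmIndex T₁) :
    IsFredholm Tψ ∧
    Submodule.map (iX : Xψ →ₗ[ℂ] X₀) (LinearMap.ker (Tψ : Xψ →ₗ[ℂ] Yψ)) =
      LinearMap.ker (T₀ : X₀ →ₗ[ℂ] Y₀) ∧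
    fredholmIndex Tψ = fredholmIndex T₀ ∧
    ∀ y : Yψ, (∃ x : Xψ, Tψ x = y) ↔ ∃ x₀ : X₀, T₀ x₀ = iY y :=
  interpolation_fredholm_general jX hjX jY hjY kX iX hiX hcX kY iY hiY hcY hinterpYX T₀ T₁ hT Tψ hTψ
    hF₀ hF₁ hker hind
end
end
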